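/- arXiv:1409.2469 — 6 statements merged into one kernel-verified Lean document; each statement's English description precedes it below -/
import Mathlib

section
/- Let G be a connected simple graph such that d(x) + d(y) ≥ t_2 for every pair of nonadjacent vertices x, y, where t_2 is the number of vertices of a longest path in G. Then G has a Hamilton cycle (or G has at most two vertices). -/
open SimpleGraph

/-- The degree of a vertex: the cardinality of its neighborhood. -/
noncomputable def deg {V : Type*} (G : SimpleGraph V) (x : V) : ℕ :=
  (G.neighborSet x).ncard

/-- The number of leaves (vertices of degree 1) of a subgraph. -/
noncomputable def leafCount {V : Type*} {G : SimpleGraph V} (H : G.Subgraph) : ℕ :=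
  {v : H.verts | (H.coe.neighborSet v).ncard = 1}.ncard

/-- `H` is a tree with at most `k` leaves (a `k`-ended tree). -/
def IsEndedTree {V : Type*} {G : SimpleGraph V} (H : G.Subgraph) (k : ℕ) : Prop :=
  H.coe.IsTree ∧ leafCount H ≤ k

/-- `t_k`: the maximum order of a subgraph of `G` that is a tree with at most `k` leaves. -/
noncomputable def treeOrd {V : Type*} (G : SimpleGraph V) (k : ℕ) : ℕ :=
  sSup {m | ∃ H : G.Subgraph, IsEndedTree H k ∧ H.verts.ncard = m}

/-- The number of vertices of a longest path in `G`. -/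
noncomputable def pathOrd {V : Type*} (G : SimpleGraph V) : ℕ :=
  sSup {m | ∃ (u v : V) (p : G.Walk u v), p.IsPath ∧ p.support.length = m}

/-- `s` is an independent set of vertices of `G`. -/
def IsIndep {V : Type*} (G : SimpleGraph V) (s : Set V) : Prop :=
  s.Pairwise fun a b => ¬ G.Adj a b

/-- `σ₃`: the minimum degree sum over independent triples of vertices. -/
noncomputable def sigma3 {V : Type*} (G : SimpleGraph V) : ℕ :=
  sInf {s | ∃ x y z : V, x ≠ y ∧ x ≠ z ∧ y ≠ z ∧
    ¬G.Adj x y ∧ ¬G.Adj x z ∧ ¬G.Adj y z ∧ s = deg G x + deg G y + deg G z}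

/-! Take a longest path `u = x₀, …, xₙ = v`, so that `t₂ = n + 1`; by maximality every
neighbour of `u` or of `v` lies on it. If `u ~ v` the path closes up into a cycle. Otherwise
`d(u) + d(v) ≥ n + 1`, so by pigeonhole over the `n` edges `xᵢxᵢ₊₁` of the path some edge has
`u ~ xᵢ₊₁` and `v ~ xᵢ`, and `u xᵢ₊₁ … v xᵢ … x₁ u` is a cycle. Either way there is a cycle
through `t₂` vertices. If it missed a vertex, connectivity would give an edge leaving the
cycle, and opening the cycle at that edge would give a path on `t₂ + 1` vertices. -/

namespace SimpleGraph

variable {V : Type*} {G : SimpleGraph V}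

lemma deg_eq_degree (x : V) [Fintype (G.neighborSet x)] : deg G x = G.degree x := by
  rw [deg, Set.ncard_eq_toFinset_card', Set.toFinset_card, card_neighborSet_eq_degree]

lemma pathOrd_bddAbove [Finite V] :
    BddAbove {m | ∃ (u v : V) (p : G.Walk u v), p.IsPath ∧ p.support.length = m} := by
  have := Fintype.ofFinite V
  refine ⟨Fintype.card V, ?_⟩
  rintro m ⟨u, v, p, hp, rfl⟩
  exact hp.support_nodup.length_le_card

lemma Walk.IsPath.length_add_one_le_pathOrd [Finite V] {u v : V} {p : G.Walk u v}
    (hp : p.IsPath) : p.length + 1 ≤ pathOrd G :=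
  le_csSup pathOrd_bddAbove ⟨u, v, p, hp, p.length_support⟩

lemma exists_isPath_length_add_one_eq_pathOrd [Finite V] [Nonempty V] :
    ∃ (u v : V) (p : G.Walk u v), p.IsPath ∧ p.length + 1 = pathOrd G := by
  obtain ⟨u, v, p, hp, hlen⟩ := Nat.sSup_mem (s := {m | ∃ (u v : V) (p : G.Walk u v),
    p.IsPath ∧ p.support.length = m}) ⟨1, _, _, .nil (u := Classical.arbitrary V), .nil, rfl⟩
    pathOrd_bddAbove
  exact ⟨u, v, p, hp, p.length_support ▸ hlen⟩

lemma Connected.three_le_pathOrd [Fintype V] (hconn : G.Connected)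
    (hcard : 2 < Fintype.card V) : 3 ≤ pathOrd G := by
  by_contra! hle
  have hadj {x y : V} (hxy : x ≠ y) : G.Adj x y := by
    obtain ⟨p, hp, hlen⟩ := hconn.exists_path_of_dist x y
    have := hp.length_add_one_le_pathOrd
    have := (hconn.dist_eq_zero_iff (u := x) (v := y)).not.mpr hxy
    exact dist_eq_one_iff_adj.mp (by omega)
  obtain ⟨a, b, c, hab, hac, hbc⟩ := Fintype.two_lt_card_iff.mp hcard
  have hp : (Walk.cons (hadj hab) (.cons (hadj hbc) .nil)).IsPath := by
    simp [hab, hac, hbc]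
  have := hp.length_add_one_le_pathOrd
  simp only [Walk.length_cons, Walk.length_nil] at this
  omega

end SimpleGraph

namespace SimpleGraph.Walk

variable {V : Type*} {G : SimpleGraph V} {u v w x y : V}

lemma IsPath.mem_support_of_adj_start [Finite V] {p : G.Walk u v} (hp : p.IsPath)
    (hmax : pathOrd G ≤ p.length + 1) (h : G.Adj u w) : w ∈ p.support := by
  by_contra hw
  have := (hp.cons hw (h := h.symm)).length_add_one_le_pathOrd
  simp only [length_cons] at this
  omega

lemma IsPath.mem_support_of_adj_end [Finite V] {p : G.Walk u v} (hp : p.IsPath)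
    (hmax : pathOrd G ≤ p.length + 1) (h : G.Adj v w) : w ∈ p.support := by
  simpa using hp.reverse.mem_support_of_adj_start (by simpa using hmax) h

lemma IsPath.isCycle_cons {p : G.Walk u v} (hp : p.IsPath) (h : G.Adj v u)
    (hlen : 2 ≤ p.length) : (cons h p).IsCycle :=
  isCycle_iff_isPath_tail_and_le_length.mpr
    ⟨by simpa [tail_cons] using hp, by rw [length_cons]; omega⟩

lemma exists_eq_append_cons_of_mem_darts {p : G.Walk u v} {d : G.Dart} (hd : d ∈ p.darts) :
    ∃ (q : G.Walk u d.fst) (r : G.Walk d.snd v), p = q.append (cons d.adj r) := by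
  induction p with
  | nil => simp at hd
  | cons h p ih =>
    rcases List.mem_cons.mp hd with rfl | hd
    · exact ⟨nil, p, rfl⟩
    · obtain ⟨q, r, rfl⟩ := ih hd
      exact ⟨cons h q, r, rfl⟩

lemma IsPath.append_cons_reverse {q : G.Walk u x} {r : G.Walk y v} (hxy : G.Adj x y)
    (hvx : G.Adj v x) (hp : (q.append (cons hxy r)).IsPath) :
    (r.append (cons hvx q.reverse)).IsPath := by
  rw [isPath_def] at hp ⊢
  simp only [support_append, support_cons, List.tail_cons, support_reverse] at hp ⊢
  exact (List.perm_append_comm.trans ((List.reverse_perm _).append_right _)).nodup_iff.mpr hp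

lemma exists_mem_darts_snd_eq {p : G.Walk u v} (hw : w ∈ p.support) (hne : w ≠ u) :
    ∃ d ∈ p.darts, d.snd = w := by
  rw [← cons_tail_support, List.mem_cons, or_iff_right hne, ← map_snd_darts, List.mem_map] at hw
  exact hw

lemma exists_mem_darts_fst_eq {p : G.Walk u v} (hw : w ∈ p.support) (hne : w ≠ v) :
    ∃ d ∈ p.darts, d.fst = w := by
  rw [← dropLast_support_concat, List.mem_append, List.mem_singleton, or_iff_left hne,
    ← map_fst_darts, List.mem_map] at hw
  exact hw

lemma degree_le_card_filter_darts [DecidableEq V] {p : G.Walk u v} (a : V)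
    [Fintype (G.neighborSet a)] (f : G.Dart → V) [DecidablePred (G.Adj a ∘ f)]
    (hf : ∀ w, G.Adj a w → ∃ d ∈ p.darts, f d = w) :
    G.degree a ≤ (p.darts.toFinset.filter (G.Adj a ∘ f)).card := by
  rw [← card_neighborFinset_eq_degree]
  refine (Finset.card_le_card fun w hw => ?_).trans (Finset.card_image_le (f := f))
  rw [mem_neighborFinset] at hw
  obtain ⟨d, hd, rfl⟩ := hf w hw
  exact Finset.mem_image_of_mem f (by simpa [hd] using hw)

lemma exists_mem_darts_adj_snd_adj_fst {p : G.Walk u v}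
    [Fintype (G.neighborSet u)] [Fintype (G.neighborSet v)]
    (hu : ∀ w, G.Adj u w → w ∈ p.support) (hv : ∀ w, G.Adj v w → w ∈ p.support)
    (hdeg : p.length < G.degree u + G.degree v) :
    ∃ d ∈ p.darts, G.Adj u d.snd ∧ G.Adj v d.fst := by
  classical
  have hsnd := degree_le_card_filter_darts u (p := p) (·.snd)
    fun w hw => exists_mem_darts_snd_eq (hu w hw) (G.ne_of_adj hw).symm
  have hfst := degree_le_card_filter_darts v (p := p) (·.fst)
    fun w hw => exists_mem_darts_fst_eq (hv w hw) (G.ne_of_adj hw).symm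
  have hcard : p.darts.toFinset.card ≤ p.length := p.length_darts ▸ p.darts.toFinset_card_le
  obtain ⟨d, hd⟩ := Finset.inter_nonempty_of_card_lt_card_add_card (s := p.darts.toFinset)
    (Finset.filter_subset _ _) (Finset.filter_subset _ _)
    (hcard.trans_lt (hdeg.trans_le (add_le_add hsnd hfst)))
  simp only [Finset.mem_inter, Finset.mem_filter, List.mem_toFinset] at hd
  exact ⟨d, hd.1.1, hd.1.2, hd.2.2⟩

lemma IsCycle.length_lt_pathOrd [Finite V] (hconn : G.Connected) {c : G.Walk u u}
    (hc : c.IsCycle) (hw : w ∉ c.support) : c.length < pathOrd G := by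
  classical
  obtain ⟨d, -, hd, hdw⟩ := (hconn.preconnected u w).some.exists_boundary_dart
    {x | x ∈ c.support} c.start_mem_support hw
  set c' := c.rotate d.fst hd
  have hc' : c'.IsCycle := hc.rotate hd
  have hnotin : d.snd ∉ c'.tail.reverse.support := by
    rw [support_reverse, List.mem_reverse, support_tail_of_not_nil _ hc'.not_nil]
    exact fun h => hdw ((mem_support_rotate_iff ..).mp (List.mem_of_mem_tail h))
  have := (hc'.isPath_tail.reverse.cons hnotin (h := d.adj.symm)).length_add_one_le_pathOrd
  rw [length_cons, length_reverse, length_tail_add_one hc'.not_nil, length_rotate] at this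
  omega

lemma IsCycle.isHamiltonianCycle_of_pathOrd_le_length [Finite V] [DecidableEq V]
    (hconn : G.Connected) {c : G.Walk u u} (hc : c.IsCycle) (hlen : pathOrd G ≤ c.length) :
    c.IsHamiltonianCycle := by
  refine ⟨hc, hc.isPath_tail.isHamiltonian_of_mem fun w => ?_⟩
  have hw : w ∈ c.support := by
    by_contra hw
    exact absurd (hc.length_lt_pathOrd hconn hw) (by omega)
  rw [support_tail_of_not_nil _ hc.not_nil]
  rw [← cons_tail_support, List.mem_cons] at hw
  rcases hw with rfl | hw
  · exact end_mem_tail_support hc.not_nil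
  · exact hw

end SimpleGraph.Walk

namespace SimpleGraph

variable {V : Type*} {G : SimpleGraph V}

lemma Connected.exists_isCycle_length_eq_pathOrd [Fintype V] (hconn : G.Connected)
    (hcard : 2 < Fintype.card V)
    (hdeg : ∀ x y : V, x ≠ y → ¬ G.Adj x y → pathOrd G ≤ deg G x + deg G y) :
    ∃ (w : V) (c : G.Walk w w), c.IsCycle ∧ c.length = pathOrd G := by
  classical
  have := hconn.nonempty
  obtain ⟨u, v, p, hp, hlen⟩ := exists_isPath_length_add_one_eq_pathOrd (G := G)
  have hlen2 : 2 ≤ p.length := by have := hconn.three_le_pathOrd hcard; omega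
  by_cases hvu : G.Adj v u
  · exact ⟨v, .cons hvu p, hp.isCycle_cons hvu hlen2, by simp [hlen]⟩
  have huv : u ≠ v := by
    rintro rfl
    have := Walk.length_eq_zero_iff.mpr (Walk.isPath_iff_nil.mp hp)
    omega
  obtain ⟨d, hd, hud, hvd⟩ := Walk.exists_mem_darts_adj_snd_adj_fst
    (fun _ => hp.mem_support_of_adj_start hlen.ge) (fun _ => hp.mem_support_of_adj_end hlen.ge)
    (by have := hdeg u v huv (hvu ·.symm); rw [deg_eq_degree, deg_eq_degree] at this; omega)
  obtain ⟨q, r, rfl⟩ := Walk.exists_eq_append_cons_of_mem_darts hd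
  refine ⟨u, .cons hud (r.append (.cons hvd q.reverse)),
    (hp.append_cons_reverse d.adj hvd).isCycle_cons hud ?_, ?_⟩ <;>
  simp only [Walk.length_cons, Walk.length_append, Walk.length_reverse] at hlen2 hlen ⊢ <;>
  omega

end SimpleGraph

/-- If `G` is connected and `d(x) + d(y) ≥ t₂` (the order of a longest
path) for every pair of nonadjacent vertices, then `G` has a Hamilton cycle (or `G` has
at most two vertices). -/
theorem hamiltonian_of_sigma_two_ge_pathOrd {V : Type*} [Fintype V] [DecidableEq V]
    (G : SimpleGraph V) (hconn : G.Connected)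
    (hdeg : ∀ x y : V, x ≠ y → ¬ G.Adj x y → pathOrd G ≤ deg G x + deg G y) :
    (∃ (v : V) (c : G.Walk v v), c.IsHamiltonianCycle) ∨ Fintype.card V ≤ 2 := by
  refine or_iff_not_imp_right.mpr fun hcard => ?_
  obtain ⟨w, c, hc, hlen⟩ := hconn.exists_isCycle_length_eq_pathOrd (by omega) hdeg
  exact ⟨w, c, hc.isHamiltonianCycle_of_pathOrd_le_length hconn hlen.ge⟩
end

section
/- Let k ≥ 2 be an integer and let G be a connected simple graph of order n such that d(x) + d(y) ≥ n − k + 1 for every pair of nonadjacent vertices x, y. Then G has a spanning tree with at most k leaves. -/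
open SimpleGraph

/-!
Take a subtree `T` of `G` with at most `k` leaves whose vertex set is maximal, and suppose some
vertex is missed, so that there is an edge `vw` with `v ∈ T` and `w ∉ T`. If `T` has fewer than
`k` leaves, or some leaf has a neighbour outside `T`, attaching that neighbour gives a larger such
tree. Otherwise fix a leaf `x`: all neighbours of `x` lie in `T`, and each neighbour `u` has a
successor `p(u)` on the path from `u` to `x` in `T`. Replacing the edge `u p(u)` by `xu` keeps a
tree and turns `x` into an inner vertex. If two neighbours share a successor `p`, then `p` keeps
degree at least two, and `w` can be attached at `v`; if some `p(u)` is adjacent to `w`, attach `w`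
at `p(u)`, which stops being a leaf. Otherwise `w`, the `d(x)` distinct vertices `p(u)` and the
other `k - 1` leaves are pairwise distinct non-neighbours of `w`, so `d(x) + d(w) ≤ n - k`,
contradicting the degree condition.
-/

lemma Set.ncard_insert_sdiff_singleton_le {α : Type*} [Finite α] {s : Set α} {a : α} (b : α)
    (ha : a ∈ s) : (insert b (s \ {a})).ncard ≤ s.ncard := by
  have := Set.ncard_insert_le b (s \ {a})
  have := (Set.ncard_pos).2 ⟨a, ha⟩
  rw [Set.ncard_sdiff_singleton_of_mem ha] at *
  omega

namespace SimpleGraph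

variable {V : Type*} {H : SimpleGraph V} {x u p z : V}

lemma Reachable.deleteEdges_or (h : H.Reachable z p) (u : V) :
    (H.deleteEdges {s(u, p)}).Reachable z p ∨ (H.deleteEdges {s(u, p)}).Reachable z u := by
  obtain ⟨w⟩ := h
  induction w with
  | nil => exact .inl .rfl
  | @cons a b p hab _ ih =>
    by_cases he : s(a, b) = s(u, p)
    · rcases Sym2.eq_iff.1 he with ⟨rfl, -⟩ | ⟨rfl, -⟩
      exacts [.inr .rfl, .inl .rfl]
    · have hab' : (H.deleteEdges {s(u, p)}).Adj a b := by simpa [he] using hab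
      exact ih.imp hab'.reachable.trans hab'.reachable.trans

lemma Preconnected.exists_adj_of_mem_of_notMem (hH : H.Preconnected) {s : Set V} (hu : u ∈ s)
    (hz : z ∉ s) : ∃ a b, a ∈ s ∧ b ∉ s ∧ H.Adj a b := by
  obtain ⟨d, -, hd₁, hd₂⟩ := (hH u z).some.exists_boundary_dart s hu hz
  exact ⟨_, _, hd₁, hd₂, d.adj⟩

lemma IsAcyclic.not_reachable_deleteEdges (hH : H.IsAcyclic) (h : H.Adj u p) :
    ¬ (H.deleteEdges {s(u, p)}).Reachable u p :=
  isBridge_iff.1 (isAcyclic_iff_forall_isBridge.1 hH h)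

/-- `p` is a neighbour of `u` through which `u` reaches `x`; in a tree, `p` is the vertex after `u`
on the path from `u` to `x`. -/
def IsStepToward (H : SimpleGraph V) (x u p : V) : Prop :=
  H.Adj u p ∧ (H.deleteEdges {s(u, p)}).Reachable p x

lemma Reachable.exists_isStepToward (h : H.Reachable u x) (hux : u ≠ x) :
    ∃ p, H.IsStepToward x u p := by
  classical
  obtain ⟨P, hP⟩ := h.some.toPath
  cases P with
  | nil => exact absurd rfl hux
  | @cons _ p _ hup q =>
    obtain ⟨-, hu⟩ := (Walk.cons_isPath_iff hup q).1 hP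
    exact ⟨p, hup, ⟨q.toDeleteEdge _ fun he => hu (q.fst_mem_support_of_mem_edges he)⟩⟩

lemma IsStepToward.exists_isStepToward_ne (h : H.IsStepToward x u p) (hpx : p ≠ x) :
    ∃ q, H.IsStepToward x p q ∧ q ≠ u := by
  obtain ⟨q, hpq, hq⟩ := h.2.exists_isStepToward hpx
  rw [deleteEdges_adj, Set.mem_singleton_iff] at hpq
  refine ⟨q, ⟨hpq.1, hq.mono ?_⟩, ?_⟩
  · exact deleteEdges_mono (deleteEdges_le _)
  · rintro rfl
    exact hpq.2 Sym2.eq_swap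

lemma IsAcyclic.not_isStepToward_swap (hH : H.IsAcyclic) (h : H.IsStepToward x u p) :
    ¬ H.IsStepToward x p u := by
  rintro ⟨-, hux⟩
  rw [Sym2.eq_swap] at hux
  exact hH.not_reachable_deleteEdges h.1 (hux.trans h.2.symm)

lemma IsAcyclic.eq_of_isStepToward_of_adj (hH : H.IsAcyclic) (h : H.IsStepToward x u p)
    (hux : H.Adj u x) : p = x := by
  by_contra hpx
  have hux' : (H.deleteEdges {s(u, p)}).Adj u x := by
    simp [hux, hux.ne', Ne.symm hpx]
  exact hH.not_reachable_deleteEdges h.1 (hux'.reachable.trans h.2.symm)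

lemma IsStepToward.two_le_ncard_neighborSet [Finite V] (h : H.IsStepToward x u p) (hpx : p ≠ x) :
    2 ≤ (H.neighborSet p).ncard := by
  obtain ⟨q, hq, hqu⟩ := h.exists_isStepToward_ne hpx
  rw [← Set.ncard_pair hqu.symm]
  exact Set.ncard_le_ncard (Set.pair_subset h.1.symm hq.1)

lemma IsAcyclic.three_le_ncard_neighborSet [Finite V] (hH : H.IsAcyclic) {u₁ u₂ : V}
    (h₁ : H.IsStepToward x u₁ p) (h₂ : H.IsStepToward x u₂ p) (hu : u₁ ≠ u₂)
    (hpx : p ≠ x) :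
    3 ≤ (H.neighborSet p).ncard := by
  obtain ⟨q, hq, hqu₁⟩ := h₁.exists_isStepToward_ne hpx
  have hqu₂ : q ≠ u₂ := by
    rintro rfl
    exact hH.not_isStepToward_swap h₂ hq
  rw [← Set.ncard_eq_three.2 ⟨u₁, u₂, q, hu, hqu₁.symm, hqu₂.symm, rfl⟩]
  exact Set.ncard_le_ncard (Set.insert_subset h₁.1.symm (Set.pair_subset h₂.1.symm hq.1))

namespace Subgraph

variable {G : SimpleGraph V} {T : G.Subgraph} {a b v w : V}

lemma spanningCoe_sup_subgraphOfAdj (h : G.Adj a w) :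
    (T ⊔ G.subgraphOfAdj h).spanningCoe = T.spanningCoe ⊔ edge a w := by
  rw [edge, ← spanningCoe_subgraphOfAdj h]
  rfl

lemma mem_verts_of_reachable_spanningCoe (h : T.spanningCoe.Reachable a b) (ha : a ∈ T.verts) :
    b ∈ T.verts := by
  obtain ⟨q⟩ := h.symm
  cases q with
  | nil => exact ha
  | cons hb _ => exact T.edge_vert hb

lemma Connected.reachable_spanningCoe (hT : T.Connected) (ha : a ∈ T.verts) (hb : b ∈ T.verts) :
    T.spanningCoe.Reachable a b :=
  (hT.preconnected ⟨a, ha⟩ ⟨b, hb⟩).map T.coeEmbeddingSpanningCoe.toHom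

lemma reachable_coe_of_walk_spanningCoe (q : T.spanningCoe.Walk a b) (ha : a ∈ T.verts)
    (hb : b ∈ T.verts) : T.coe.Reachable ⟨a, ha⟩ ⟨b, hb⟩ := by
  induction q with
  | nil => rfl
  | cons hac _ ih =>
    have hac' : T.coe.Adj ⟨_, ha⟩ ⟨_, T.edge_vert hac.symm⟩ := hac
    exact hac'.reachable.trans (ih _ hb)

lemma connected_of_forall_reachable_spanningCoe (hx : x ∈ T.verts)
    (h : ∀ v ∈ T.verts, T.spanningCoe.Reachable v x) : T.Connected := by
  rw [Subgraph.connected_iff', connected_iff_exists_forall_reachable]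
  refine ⟨⟨x, hx⟩, fun ⟨v, hv⟩ => ?_⟩
  obtain ⟨q⟩ := (h v hv).symm
  exact reachable_coe_of_walk_spanningCoe q hx hv

lemma Connected.neighborSet_nonempty (hT : T.Connected) (ha : a ∈ T.verts)
    (hnt : T.verts.Nontrivial) : (T.neighborSet a).Nonempty := by
  have := hnt.coe_sort
  obtain ⟨b, hb⟩ := hT.preconnected.exists_adj_of_nontrivial ⟨a, ha⟩
  exact ⟨b, hb⟩

/-- Acyclicity is tracked on `T.spanningCoe`, where adding and deleting edges is easier than on
`T.coe`. -/
structure IsSubtree (T : G.Subgraph) : Prop where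
  connected : T.Connected
  isAcyclic : T.spanningCoe.IsAcyclic

lemma IsSubtree.isTree_coe (hT : T.IsSubtree) : T.coe.IsTree :=
  ⟨hT.connected.coe, hT.isAcyclic.embedding T.coeEmbeddingSpanningCoe⟩

lemma isSubtree_singletonSubgraph (v : V) : (G.singletonSubgraph v).IsSubtree where
  connected := singletonSubgraph_connected
  isAcyclic := by
    have : (G.singletonSubgraph v).spanningCoe = ⊥ := by ext; simp
    exact this ▸ isAcyclic_bot

lemma verts_sup_subgraphOfAdj (ha : a ∈ T.verts) (h : G.Adj a w) :
    (T ⊔ G.subgraphOfAdj h).verts = insert w T.verts := by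
  simp [ha]

lemma ssubset_verts_sup_subgraphOfAdj (ha : a ∈ T.verts) (hw : w ∉ T.verts) (h : G.Adj a w) :
    T.verts ⊂ (T ⊔ G.subgraphOfAdj h).verts := by
  rw [verts_sup_subgraphOfAdj ha]
  exact Set.ssubset_insert hw

lemma IsSubtree.sup_subgraphOfAdj (hT : T.IsSubtree) (ha : a ∈ T.verts) (hw : w ∉ T.verts)
    (h : G.Adj a w) : (T ⊔ G.subgraphOfAdj h).IsSubtree where
  connected := connected_sup hT.connected.preconnected (subgraphOfAdj_connected h).preconnected
    ⟨a, ha, by simp⟩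
  isAcyclic := by
    rw [spanningCoe_sup_subgraphOfAdj]
    exact hT.isAcyclic.sup_edge_of_not_reachable fun haw =>
      hw (mem_verts_of_reachable_spanningCoe haw ha)

def replaceEdge (T : G.Subgraph) (u p : V) (h : G.Adj x u) : G.Subgraph :=
  T.deleteEdges {s(u, p)} ⊔ G.subgraphOfAdj h

lemma verts_replaceEdge (h : G.Adj x u) (hx : x ∈ T.verts) (hu : u ∈ T.verts) :
    (T.replaceEdge u p h).verts = T.verts := by
  simp [replaceEdge, hx, hu]

lemma IsSubtree.replaceEdge (hT : T.IsSubtree) (hs : T.spanningCoe.IsStepToward x u p)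
    (h : G.Adj x u) : (T.replaceEdge u p h).IsSubtree := by
  set K := T.spanningCoe.deleteEdges {s(u, p)}
  have hsc : (T.replaceEdge u p h).spanningCoe = K ⊔ edge x u := by
    rw [Subgraph.replaceEdge, spanningCoe_sup_subgraphOfAdj, ← deleteEdges_spanningCoe_eq]
  have hu : u ∈ T.verts := T.edge_vert hs.1
  have hx : x ∈ T.verts :=
    mem_verts_of_reachable_spanningCoe (hs.2.mono (SimpleGraph.deleteEdges_le _))
      (T.edge_vert hs.1.symm)
  refine ⟨connected_of_forall_reachable_spanningCoe (x := x) ?_ fun v hv => ?_, ?_⟩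
  · rwa [verts_replaceEdge h hx hu]
  · rw [verts_replaceEdge h hx hu] at hv
    have hKle : K ≤ (T.replaceEdge u p h).spanningCoe := hsc ▸ le_sup_left
    have hux : (T.replaceEdge u p h).spanningCoe.Reachable u x := by
      rw [hsc]
      exact Adj.reachable (by simp [edge_adj, h.ne'])
    rcases (hT.connected.reachable_spanningCoe hv (T.edge_vert hs.1.symm)).deleteEdges_or u with
      hvp | hvu
    · exact (hvp.trans hs.2).mono hKle
    · exact (hvu.mono hKle).trans hux
  · rw [hsc]
    exact (hT.isAcyclic.anti (SimpleGraph.deleteEdges_le _)).sup_edge_of_not_reachable fun hxu =>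
      hT.isAcyclic.not_reachable_deleteEdges hs.1 (hxu.symm.trans hs.2.symm)

def leafSet (T : G.Subgraph) : Set V := {v | (T.neighborSet v).ncard = 1}

lemma neighborSet_nonempty_of_mem_leafSet (ha : a ∈ T.leafSet) : (T.neighborSet a).Nonempty :=
  Set.nonempty_of_ncard_ne_zero (ha.symm ▸ one_ne_zero)

lemma leafSet_subset_verts : T.leafSet ⊆ T.verts := fun _ ha =>
  T.edge_vert (neighborSet_nonempty_of_mem_leafSet ha).some_mem

lemma leafCount_eq_ncard_leafSet (T : G.Subgraph) : leafCount T = T.leafSet.ncard := by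
  have hdeg (v : T.verts) : (T.coe.neighborSet v).ncard = (T.neighborSet v).ncard := by
    simp only [← Nat.card_coe_set_eq]
    exact Nat.card_congr (coeNeighborSetEquiv v)
  have : {v : T.verts | (T.coe.neighborSet v).ncard = 1} = Subtype.val ⁻¹' T.leafSet := by
    ext v
    simp [leafSet, hdeg]
  rw [leafCount, this, Set.ncard_preimage_of_injective_subset_range Subtype.val_injective
    (by simpa using leafSet_subset_verts)]

lemma leafSet_sup_subgraphOfAdj_subset [Finite V] (h : G.Adj a w) (hnadj : ¬T.Adj a w)
    (ha : (T.neighborSet a).Nonempty) :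
    (T ⊔ G.subgraphOfAdj h).leafSet ⊆ insert w (T.leafSet \ {a}) := by
  intro z (hz : ((T ⊔ G.subgraphOfAdj h).neighborSet z).ncard = 1)
  rw [neighborSet_sup] at hz
  rcases eq_or_ne z w with rfl | hzw
  · exact Set.mem_insert _ _
  rcases eq_or_ne z a with rfl | hza
  · rw [neighborSet_fst_subgraphOfAdj, Set.union_singleton,
      Set.ncard_insert_of_notMem (show w ∉ T.neighborSet z from hnadj)] at hz
    have := (Set.ncard_pos).2 ha
    omega
  · rw [neighborSet_subgraphOfAdj_of_ne_of_ne h hza hzw, Set.union_empty] at hz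
    exact Or.inr ⟨hz, hza⟩

lemma ncard_leafSet_sup_subgraphOfAdj_le [Finite V] (hT : T.Connected) (ha : a ∈ T.verts)
    (hw : w ∉ T.verts) (h : G.Adj a w) :
    (T ⊔ G.subgraphOfAdj h).leafSet.ncard ≤ max 2 (T.leafSet.ncard + 1) := by
  by_cases hnt : T.verts.Nontrivial
  · have := Set.ncard_le_ncard (leafSet_sup_subgraphOfAdj_subset h
      (fun h => hw (T.edge_vert h.symm)) (hT.neighborSet_nonempty ha hnt))
    have := Set.ncard_insert_le w (T.leafSet \ {a})
    have := Set.ncard_sdiff_singleton_le T.leafSet a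
    omega
  · have := Set.ncard_le_ncard (leafSet_subset_verts.trans (verts_sup_subgraphOfAdj ha h).subset)
    have := Set.ncard_insert_le w T.verts
    have : T.verts.ncard ≤ 1 := Set.ncard_le_one_iff_subsingleton.2 (Set.not_nontrivial_iff.1 hnt)
    omega

lemma neighborSet_replaceEdge_left (h : G.Adj x u) (hxp : x ≠ p) :
    (T.replaceEdge u p h).neighborSet x = insert u (T.neighborSet x) := by
  ext y
  simp [Subgraph.replaceEdge, h.ne, hxp]

lemma neighborSet_replaceEdge_mid (h : G.Adj x u) :
    (T.replaceEdge u p h).neighborSet u = insert x (T.neighborSet u \ {p}) := by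
  ext y
  have hyu : T.Adj u y → y ≠ u := fun hy => (T.adj_sub hy).ne'
  simp [Subgraph.replaceEdge]
  tauto

lemma neighborSet_replaceEdge_right (h : G.Adj x u) (hxp : x ≠ p) (hup : u ≠ p) :
    (T.replaceEdge u p h).neighborSet p = T.neighborSet p \ {u} := by
  ext y
  simp [Subgraph.replaceEdge, hxp.symm, hup.symm]

lemma neighborSet_replaceEdge_of_ne (h : G.Adj x u) (hzx : z ≠ x) (hzu : z ≠ u)
    (hzp : z ≠ p) :
    (T.replaceEdge u p h).neighborSet z = T.neighborSet z := by
  ext y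
  simp [Subgraph.replaceEdge, hzx, hzu, hzp]

lemma ncard_neighborSet_replaceEdge_right [Finite V] (h : G.Adj x u) (hup : T.Adj u p)
    (hxp : x ≠ p) :
    ((T.replaceEdge u p h).neighborSet p).ncard = (T.neighborSet p).ncard - 1 := by
  rw [neighborSet_replaceEdge_right h hxp (T.adj_sub hup).ne,
    Set.ncard_sdiff_singleton_of_mem (show u ∈ T.neighborSet p from T.adj_symm hup)]

lemma leafSet_replaceEdge_subset [Finite V] (h : G.Adj x u) (hup : T.Adj u p) (hxu : ¬T.Adj x u)
    (hxp : x ≠ p) (hx : (T.neighborSet x).Nonempty) :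
    (T.replaceEdge u p h).leafSet ⊆ insert p (T.leafSet \ {x}) := by
  intro z (hz : ((T.replaceEdge u p h).neighborSet z).ncard = 1)
  rcases eq_or_ne z p with rfl | hzp
  · exact Set.mem_insert _ _
  rcases eq_or_ne z x with rfl | hzx
  · rw [neighborSet_replaceEdge_left h hzp,
      Set.ncard_insert_of_notMem (show u ∉ T.neighborSet z from hxu)] at hz
    have := (Set.ncard_pos).2 hx
    omega
  refine Or.inr ⟨?_, hzx⟩
  rcases eq_or_ne z u with rfl | hzu
  · have hpz : p ∈ T.neighborSet z := hup
    have hxz : x ∉ T.neighborSet z \ {p} := fun hxz => hxu (T.adj_symm hxz.1)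
    rw [neighborSet_replaceEdge_mid h, Set.ncard_insert_of_notMem hxz,
      Set.ncard_sdiff_singleton_of_mem hpz] at hz
    have := (Set.ncard_pos).2 ⟨p, hpz⟩
    show (T.neighborSet z).ncard = 1
    omega
  · rwa [neighborSet_replaceEdge_of_ne h hzx hzu hzp] at hz

lemma IsSubtree.not_adj_of_isStepToward (hT : T.IsSubtree)
    (hs : T.spanningCoe.IsStepToward x u p) (hpx : p ≠ x) : ¬T.Adj x u := fun hxu =>
  hpx (hT.isAcyclic.eq_of_isStepToward_of_adj hs (T.adj_symm hxu))

section

variable [Finite V]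

lemma IsSubtree.exists_extension_of_adj_isStepToward (hT : T.IsSubtree) (hx : x ∈ T.leafSet)
    (hs : T.spanningCoe.IsStepToward x u p) (hpx : p ≠ x) (hxu : G.Adj x u) (hw : w ∉ T.verts)
    (hpw : G.Adj p w) :
    ∃ T' : G.Subgraph, T'.IsSubtree ∧ T'.verts = insert w T.verts ∧
      T'.leafSet ⊆ insert w (T.leafSet \ {x}) := by
  set T₂ := T.replaceEdge u p hxu
  have hverts : T₂.verts = T.verts :=
    verts_replaceEdge hxu (leafSet_subset_verts hx) (T.edge_vert hs.1)
  have hleaves : T₂.leafSet \ {p} ⊆ T.leafSet \ {x} :=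
    Set.sdiff_singleton_subset_iff.2 <| leafSet_replaceEdge_subset hxu hs.1
      (hT.not_adj_of_isStepToward hs hpx) hpx.symm (neighborSet_nonempty_of_mem_leafSet hx)
  have hp : (T₂.neighborSet p).Nonempty := by
    have : 2 ≤ (T.neighborSet p).ncard := hs.two_le_ncard_neighborSet hpx
    refine Set.nonempty_of_ncard_ne_zero ?_
    rw [ncard_neighborSet_replaceEdge_right hxu hs.1 hpx.symm]
    omega
  have hpT₂ : p ∈ T₂.verts := hverts ▸ T.edge_vert hs.1.symm
  have hwT₂ : w ∉ T₂.verts := hverts ▸ hw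
  refine ⟨_, (hT.replaceEdge hs hxu).sup_subgraphOfAdj hpT₂ hwT₂ hpw, ?_, ?_⟩
  · rw [verts_sup_subgraphOfAdj hpT₂, hverts]
  · exact (leafSet_sup_subgraphOfAdj_subset hpw (fun h => hwT₂ (T₂.edge_vert h.symm)) hp).trans
      (Set.insert_subset_insert hleaves)

lemma IsSubtree.exists_extension_of_isStepToward_of_isStepToward (hT : T.IsSubtree)
    (hx : x ∈ T.leafSet) {u₁ u₂ : V} (hs₁ : T.spanningCoe.IsStepToward x u₁ p)
    (hs₂ : T.spanningCoe.IsStepToward x u₂ p) (hu : u₁ ≠ u₂) (hxu : G.Adj x u₁)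
    (hv : v ∈ T.verts) (hw : w ∉ T.verts) (hvw : G.Adj v w) :
    ∃ T' : G.Subgraph, T'.IsSubtree ∧ T'.verts = insert w T.verts ∧
      T'.leafSet ⊆ insert w (T.leafSet \ {x}) := by
  have hxT := leafSet_subset_verts hx
  have hpx : p ≠ x := by
    rintro rfl
    have : ({u₁, u₂} : Set V).ncard ≤ (T.neighborSet p).ncard :=
      Set.ncard_le_ncard (Set.pair_subset (T.adj_symm hs₁.1) (T.adj_symm hs₂.1))
    rw [Set.ncard_pair hu, show (T.neighborSet p).ncard = 1 from hx] at this
    omega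
  set T₂ := T.replaceEdge u₁ p hxu
  have hverts : T₂.verts = T.verts := verts_replaceEdge hxu hxT (T.edge_vert hs₁.1)
  have hleaves : T₂.leafSet ⊆ T.leafSet \ {x} := by
    intro z hz
    obtain rfl | hz' := leafSet_replaceEdge_subset hxu hs₁.1
      (hT.not_adj_of_isStepToward hs₁ hpx) hpx.symm (neighborSet_nonempty_of_mem_leafSet hx) hz
    · have h₃ : 3 ≤ (T.neighborSet z).ncard :=
        hT.isAcyclic.three_le_ncard_neighborSet hs₁ hs₂ hu hpx
      have h₁ : (T₂.neighborSet z).ncard = 1 := hz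
      rw [ncard_neighborSet_replaceEdge_right hxu hs₁.1 hpx.symm] at h₁
      omega
    · exact hz'
  have hvT₂ : v ∈ T₂.verts := hverts ▸ hv
  have hwT₂ : w ∉ T₂.verts := hverts ▸ hw
  have hv₂ : (T₂.neighborSet v).Nonempty :=
    (hT.replaceEdge hs₁ hxu).connected.neighborSet_nonempty hvT₂
      ⟨x, hverts ▸ hxT, u₁, hverts ▸ T.edge_vert hs₁.1, hxu.ne⟩
  refine ⟨_, (hT.replaceEdge hs₁ hxu).sup_subgraphOfAdj hvT₂ hwT₂ hvw, ?_, ?_⟩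
  · rw [verts_sup_subgraphOfAdj hvT₂, hverts]
  · exact (leafSet_sup_subgraphOfAdj_subset hvw (fun h => hwT₂ (T₂.edge_vert h.symm))
      hv₂).trans (Set.insert_subset_insert (Set.sdiff_subset.trans hleaves))

end

section

variable [Fintype V]

lemma deg_add_deg_add_ncard_leafSet_le (hx : x ∈ T.leafSet)
    (hout : ∀ y ∈ T.leafSet, G.neighborSet y ⊆ T.verts) (hw : w ∉ T.verts) {q : V → V}
    (hq : ∀ u ∈ G.neighborSet x, T.spanningCoe.IsStepToward x u (q u))
    (hinj : Set.InjOn q (G.neighborSet x)) (hqw : ∀ u ∈ G.neighborSet x, ¬G.Adj (q u) w) :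
    deg G x + deg G w + T.leafSet.ncard ≤ Fintype.card V := by
  set S := q '' G.neighborSet x
  set L := T.leafSet \ {x}
  have hSL : Disjoint S L := by
    rw [Set.disjoint_left]
    rintro _ ⟨u, hu, rfl⟩ ⟨hL, hux⟩
    have : 2 ≤ (T.neighborSet (q u)).ncard := (hq u hu).two_le_ncard_neighborSet hux
    rw [show (T.neighborSet (q u)).ncard = 1 from hL] at this
    omega
  have hwSL : w ∉ S ∪ L := by
    rintro (⟨u, hu, rfl⟩ | hL)
    · exact hw (T.edge_vert (hq u hu).1.symm)
    · exact hw (leafSet_subset_verts hL.1)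
  have hdisj : Disjoint (G.neighborSet w) (insert w (S ∪ L)) := by
    rw [Set.disjoint_right]
    rintro y (rfl | ⟨u, hu, rfl⟩ | ⟨hL, -⟩) hwy
    · exact G.irrefl hwy
    · exact hqw u hu hwy.symm
    · exact hw (hout y hL hwy.symm)
  have hcard := Set.ncard_le_card (G.neighborSet w ∪ insert w (S ∪ L))
  rw [Set.ncard_union_eq hdisj, Set.ncard_insert_of_notMem hwSL, Set.ncard_union_eq hSL,
    hinj.ncard_image, Set.ncard_sdiff_singleton_of_mem hx, Nat.card_eq_fintype_card] at hcard
  have : 0 < T.leafSet.ncard := (Set.ncard_pos).2 ⟨x, hx⟩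
  unfold deg
  omega

lemma IsSubtree.exists_extension_of_mem_leafSet (hT : T.IsSubtree) (hx : x ∈ T.leafSet)
    (hout : ∀ y ∈ T.leafSet, G.neighborSet y ⊆ T.verts) (hv : v ∈ T.verts)
    (hw : w ∉ T.verts) (hvw : G.Adj v w)
    (hdeg : Fintype.card V < deg G x + deg G w + T.leafSet.ncard) :
    ∃ T' : G.Subgraph, T'.IsSubtree ∧ T'.verts = insert w T.verts ∧
      T'.leafSet ⊆ insert w (T.leafSet \ {x}) := by
  have hstep (u : V) (hu : u ∈ G.neighborSet x) : ∃ p, T.spanningCoe.IsStepToward x u p :=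
    (hT.connected.reachable_spanningCoe (hout x hx hu)
      (leafSet_subset_verts hx)).exists_isStepToward (G.ne_of_adj hu).symm
  choose! q hq using hstep
  by_cases hinj : Set.InjOn q (G.neighborSet x)
  · by_cases hqw : ∃ u ∈ G.neighborSet x, G.Adj (q u) w
    · obtain ⟨u, hu, hqw⟩ := hqw
      have hqx : q u ≠ x := by
        rintro hqx
        exact hw (hout x hx (hqx ▸ hqw))
      exact hT.exists_extension_of_adj_isStepToward hx (hq u hu) hqx hu hw hqw
    · push Not at hqw
      exact absurd (deg_add_deg_add_ncard_leafSet_le hx hout hw hq hinj hqw) hdeg.not_ge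
  · obtain ⟨u₁, hu₁, u₂, hu₂, hq₁₂, hu⟩ :
        ∃ u₁ ∈ G.neighborSet x, ∃ u₂ ∈ G.neighborSet x, q u₁ = q u₂ ∧ u₁ ≠ u₂ := by
      simpa [Set.InjOn] using hinj
    exact hT.exists_extension_of_isStepToward_of_isStepToward hx (hq u₁ hu₁)
      (hq₁₂ ▸ hq u₂ hu₂) hu hu₁ hv hw hvw

end

lemma IsSubtree.exists_ssubset_verts [Fintype V] {k : ℕ} (hk : 2 ≤ k) (hG : G.Connected)
    (hdeg : ∀ x y : V, x ≠ y → ¬ G.Adj x y →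
      (Fintype.card V : ℤ) - k + 1 ≤ (deg G x : ℤ) + deg G y)
    (hT : T.IsSubtree) (hl : T.leafSet.ncard ≤ k) (hns : ¬T.IsSpanning) :
    ∃ T' : G.Subgraph, T'.IsSubtree ∧ T'.leafSet.ncard ≤ k ∧ T.verts ⊂ T'.verts := by
  obtain ⟨w₀, hw₀⟩ := not_forall.1 hns
  obtain ⟨v, w, hv, hw, hvw⟩ :=
    hG.preconnected.exists_adj_of_mem_of_notMem hT.connected.nonempty.some_mem hw₀
  rcases hl.lt_or_eq with hlt | hlk
  · exact ⟨_, hT.sup_subgraphOfAdj hv hw hvw,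
      (ncard_leafSet_sup_subgraphOfAdj_le hT.connected hv hw hvw).trans (max_le hk hlt),
      ssubset_verts_sup_subgraphOfAdj hv hw hvw⟩
  suffices ∃ x ∈ T.leafSet, ∃ w ∉ T.verts, ∃ T' : G.Subgraph, T'.IsSubtree ∧
      T'.verts = insert w T.verts ∧ T'.leafSet ⊆ insert w (T.leafSet \ {x}) by
    obtain ⟨x, hx, w, hw, T', hT', hverts, hleaves⟩ := this
    refine ⟨T', hT', ?_, hverts ▸ Set.ssubset_insert hw⟩
    exact (Set.ncard_le_ncard hleaves).trans ((Set.ncard_insert_sdiff_singleton_le w hx).trans hl)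
  by_cases hout : ∀ y ∈ T.leafSet, G.neighborSet y ⊆ T.verts
  · obtain ⟨x, hx⟩ : T.leafSet.Nonempty := Set.nonempty_of_ncard_ne_zero (by omega)
    have hxw : ¬G.Adj x w := fun h => hw (hout x hx h)
    have := hdeg x w (fun h => hw (h ▸ leafSet_subset_verts hx)) hxw
    exact ⟨x, hx, w, hw, hT.exists_extension_of_mem_leafSet hx hout hv hw hvw (by omega)⟩
  · push Not at hout
    obtain ⟨y, hy, hsub⟩ := hout
    obtain ⟨z, hyz : G.Adj y z, hz⟩ := Set.not_subset.1 hsub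
    have hyT := leafSet_subset_verts hy
    exact ⟨y, hy, z, hz, _, hT.sup_subgraphOfAdj hyT hz hyz, verts_sup_subgraphOfAdj hyT hyz,
      leafSet_sup_subgraphOfAdj_subset hyz (fun h => hz (T.edge_vert h.symm))
        (neighborSet_nonempty_of_mem_leafSet hy)⟩

end Subgraph
end SimpleGraph

/-- If `k ≥ 2`, `G` is connected of order `n` and `d(x) + d(y) ≥ n - k + 1`
for every pair of nonadjacent vertices, then `G` has a spanning tree with at most `k`
leaves. -/
theorem spanning_k_ended_tree {V : Type*} [Fintype V] (k : ℕ) (hk : 2 ≤ k)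
    (G : SimpleGraph V) (hconn : G.Connected)
    (hdeg : ∀ x y : V, x ≠ y → ¬ G.Adj x y →
      (Fintype.card V : ℤ) - k + 1 ≤ (deg G x : ℤ) + deg G y) :
    ∃ H : G.Subgraph, H.IsSpanning ∧ IsEndedTree H k := by
  set S := {T : G.Subgraph | T.IsSubtree ∧ T.leafSet.ncard ≤ k}
  obtain ⟨v⟩ := hconn.nonempty
  have hS : G.singletonSubgraph v ∈ S := by
    refine ⟨Subgraph.isSubtree_singletonSubgraph v, ?_⟩
    have := Set.ncard_le_ncard (Subgraph.leafSet_subset_verts (T := G.singletonSubgraph v))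
    simp only [singletonSubgraph_verts, Set.ncard_singleton] at this
    omega
  obtain ⟨T, ⟨hT, hl⟩, hmax⟩ := S.toFinite.exists_maximalFor Subgraph.verts S ⟨_, hS⟩
  have hsp : T.IsSpanning := by
    by_contra hns
    obtain ⟨T', hT', hl', hlt⟩ := hT.exists_ssubset_verts hk hconn hdeg hl hns
    exact hlt.not_subset (hmax ⟨hT', hl'⟩ hlt.subset)
  exact ⟨T, hsp, hT.isTree_coe, (Subgraph.leafCount_eq_ncard_leafSet T).trans_le hl⟩
end

section
/- Let G be a connected simple graph, let T_2 be a longest path in G with endpoints x and y and a fixed orientation from x to y, and let Q be a path in G from a vertex w ∈ V(T_2) to a vertex z with V(T_2) ∩ V(Q) = {w} and |V(Q)| ≥ 3, chosen with |V(Q)| as large as possible. Then {x, y, z} is an independent set, and moreover the sets N⁻(x), N⁺(y), N(z) are pairwise disjoint, where N⁻(x) is the set of predecessors on T_2 of neighbors of x, N⁺(y) is the set of successors on T_2 of neighbors of y, and N(z) is the neighborhood of z in G. -/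
open SimpleGraph

/-- `N⁻(x)`: the set of predecessors along `p` of neighbors of `x`. -/
def predNbrs {V : Type*} {G : SimpleGraph V} {a b : V} (p : G.Walk a b) (x : V) : Set V :=
  {u | ∃ i, i < p.length ∧ G.Adj x (p.getVert (i + 1)) ∧ u = p.getVert i}

/-- `N⁺(y)`: the set of successors along `p` of neighbors of `y`. -/
def succNbrs {V : Type*} {G : SimpleGraph V} {a b : V} (p : G.Walk a b) (y : V) : Set V :=
  {u | ∃ i, i < p.length ∧ G.Adj y (p.getVert i) ∧ u = p.getVert (i + 1)}

/-! If `m` is a path from `w` using only vertices of `p`, then `q⁻¹ ++ m` is a path, so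
`‖q‖ + ‖m‖ ≤ ‖p‖`, and `‖q‖ ≥ 2` leaves no room for `‖m‖ ≥ ‖p‖ - 1`. An edge `xy` closes `V(p)`
into a cycle, and for `v ∈ N⁻(x) ∩ N⁺(y)` the edges `x v⁺` and `y v⁻` close `V(p) \ {v}` into a
cycle; opened at `w`, either cycle is such an `m` (for `w = v` use the Pósa rotation
`v … x v⁺ … y` instead). A neighbour `z ∉ V(p)` of some `v ∈ N⁻(x)` prefixed to that rotation gives
a path longer than `p`. -/

namespace SimpleGraph.Walk

variable {V : Type*} {G : SimpleGraph V}

open List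

lemma IsPath.of_support_subperm {u v a b : V} {p : G.Walk u v} {m : G.Walk a b}
    (hp : p.IsPath) (h : m.support <+~ p.support) : m.IsPath := by
  obtain ⟨l, hl, hsub⟩ := h
  exact IsPath.mk' ((hsub.nodup hp.support_nodup).perm hl)

lemma exists_support_perm_of_adj [DecidableEq V] {a b w : V} (P : G.Walk a b) (hba : G.Adj b a)
    (hw : w ∈ P.support) : ∃ (w' : V) (m : G.Walk w w'), m.support ~ P.support := by
  let c := (cons hba P).rotate w (List.mem_cons_of_mem b hw)
  refine ⟨_, c.dropLast, ?_⟩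
  have hc : ¬ c.Nil := (nil_rotate _).not.mpr not_nil_cons
  rw [support_dropLast hc]
  exact (c.tail_support_perm_dropLast_support.symm.trans (support_rotate _ _ _).perm)

lemma exists_support_perm_of_adj_getVert_succ {u v : V} (p : G.Walk u v) {i : ℕ}
    (hi : i < p.length) (hu : G.Adj u (p.getVert (i + 1))) :
    ∃ m : G.Walk (p.getVert i) v, m.support ~ p.support := by
  refine ⟨(p.take i).reverse.append (cons hu (p.drop (i + 1))), ?_⟩
  rw [support_append, support_reverse, support_cons, List.tail_cons, support_take,
    drop_support_eq_support_drop_min, min_eq_left (by omega)]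
  calc _ ~ p.support.take (i + 1) ++ p.support.drop (i + 1) := (reverse_perm _).append_right _
    _ = p.support := take_append_drop _ _

lemma exists_support_perm_eraseIdx_of_adj {u v : V} (p : G.Walk u v) {j : ℕ}
    (hj : j + 1 < p.length) (hv : G.Adj v (p.getVert j)) :
    ∃ P : G.Walk (p.getVert (j + 2)) u, P.support ~ p.support.eraseIdx (j + 1) := by
  refine ⟨(p.drop (j + 2)).append (cons hv (p.take j).reverse), ?_⟩
  rw [support_append, support_cons, List.tail_cons, support_reverse, support_take,
    drop_support_eq_support_drop_min, min_eq_left (by omega), eraseIdx_eq_take_drop_succ]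
  exact perm_append_comm.trans ((reverse_perm _).append_right _)

end SimpleGraph.Walk

section

open SimpleGraph Walk
open scoped List

variable {V : Type*} {G : SimpleGraph V}

lemma predNbrs_reverse {a b : V} (p : G.Walk a b) (y : V) :
    predNbrs p.reverse y = succNbrs p y := by
  ext u
  simp only [predNbrs, succNbrs, length_reverse, getVert_reverse]
  constructor
  · rintro ⟨i, hi, hadj, rfl⟩
    refine ⟨p.length - (i + 1), by omega, hadj, ?_⟩
    rw [show p.length - (i + 1) + 1 = p.length - i by omega]
  · rintro ⟨j, hj, hadj, rfl⟩
    refine ⟨p.length - (j + 1), by omega, ?_, ?_⟩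
    · rwa [show p.length - (p.length - (j + 1) + 1) = j by omega]
    · rw [show p.length - (p.length - (j + 1)) = j + 1 by omega]

lemma start_mem_predNbrs {x y : V} {p : G.Walk x y} (h : 0 < p.length) : x ∈ predNbrs p x :=
  ⟨0, h, by simpa using p.adj_getVert_succ h, by simp⟩

section LongestPath

variable {x y : V} {p : G.Walk x y} (hp : p.IsPath)
  (hlong : ∀ (u v : V) (r : G.Walk u v), r.IsPath → r.length ≤ p.length)
include hp hlong

lemma disjoint_predNbrs_neighborSet {z : V} (hz : z ∉ p.support) :
    Disjoint (predNbrs p x) (G.neighborSet z) := by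
  rw [Set.disjoint_left]
  rintro _ ⟨i, hi, hx, rfl⟩ (hzi : G.Adj z _)
  obtain ⟨m, hm⟩ := p.exists_support_perm_of_adj_getVert_succ hi hx
  have hpath : (cons hzi m).IsPath :=
    (cons_isPath_iff _ _).mpr ⟨hp.of_support_subperm hm.subperm, fun h => hz (hm.subset h)⟩
  have hlen := hm.length_eq
  have := hlong _ _ _ hpath
  simp only [length_support, Walk.length_cons] at hlen this
  omega

lemma disjoint_succNbrs_neighborSet {z : V} (hz : z ∉ p.support) :
    Disjoint (succNbrs p y) (G.neighborSet z) := by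
  rw [← predNbrs_reverse]
  exact disjoint_predNbrs_neighborSet hp.reverse (by simpa using hlong) (by simpa using hz)

variable {w z : V} {q : G.Walk w z} (hq : q.IsPath)
  (hint : ∀ v, v ∈ p.support → v ∈ q.support → v = w)
include hq hint

lemma length_add_length_le {c : V} {m : G.Walk w c} (hm : m.support <+~ p.support) :
    q.length + m.length ≤ p.length := by
  have hmn := (hp.of_support_subperm hm).support_nodup
  have hpath : (q.reverse.append m).IsPath := by
    rw [isPath_def, support_append, support_reverse, List.nodup_append]
    refine ⟨List.nodup_reverse.mpr hq.support_nodup, hmn.sublist (List.tail_sublist _), ?_⟩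
    rintro v hvq _ hvm rfl
    obtain rfl := hint v (hm.subset (List.mem_of_mem_tail hvm)) (List.mem_reverse.mp hvq)
    rw [← cons_tail_support m] at hmn
    exact (List.nodup_cons.mp hmn).1 hvm
  simpa using hlong _ _ _ hpath

lemma not_adj_endpoints (hw : w ∈ p.support) (hq0 : 0 < q.length) : ¬ G.Adj x y := by
  classical
  intro hxy
  obtain ⟨_, m, hm⟩ := p.exists_support_perm_of_adj hxy.symm hw
  have hlen := hm.length_eq
  have := length_add_length_le hp hlong hq hint hm.subperm
  simp only [length_support] at hlen
  omega

lemma disjoint_predNbrs_succNbrs (hw : w ∈ p.support) (hq2 : 2 ≤ q.length) :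
    Disjoint (predNbrs p x) (succNbrs p y) := by
  classical
  rw [Set.disjoint_left]
  rintro _ ⟨i, hi, hx, rfl⟩ ⟨j, hj, hy, hij⟩
  obtain rfl : i = j + 1 := hp.getVert_injOn (by rw [Set.mem_ofPred_eq]; omega) (by rw [Set.mem_ofPred_eq]; omega) hij
  obtain ⟨k, rfl, hk⟩ := mem_support_iff_exists_getVert.mp hw
  rcases eq_or_ne k (j + 1) with rfl | hkj
  · obtain ⟨m, hm⟩ := p.exists_support_perm_of_adj_getVert_succ hi hx
    have hlen := hm.length_eq
    have := length_add_length_le hp hlong hq hint hm.subperm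
    simp only [length_support] at hlen
    omega
  · obtain ⟨P, hP⟩ := p.exists_support_perm_eraseIdx_of_adj hi hy
    have hkP : p.getVert k ∈ P.support := hP.symm.subset <| List.mem_eraseIdx_iff_getElem.mpr
      ⟨k, by rw [length_support]; omega, hkj, (getVert_eq_support_getElem p hk).symm⟩
    obtain ⟨_, m, hm⟩ := P.exists_support_perm_of_adj hx hkP
    have hmp := hm.trans hP
    have hlen := hmp.length_eq
    have := length_add_length_le hp hlong hq hint
      (hmp.subperm.trans (List.eraseIdx_sublist _ _).subperm)
    simp only [length_support, List.length_eraseIdx] at hlen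
    split_ifs at hlen <;> omega

end LongestPath

end

theorem indep_and_disjoint_of_longest_path_general {V : Type*}
    (G : SimpleGraph V)
    {x y : V} (p : G.Walk x y) (hp : p.IsPath)
    (hlong : ∀ (u v : V) (r : G.Walk u v), r.IsPath →
      r.support.length ≤ p.support.length)
    {w z : V} (q : G.Walk w z) (hq : q.IsPath)
    (hw : w ∈ p.support)
    (hint : ∀ v, v ∈ p.support → v ∈ q.support → v = w)
    (hq3 : 3 ≤ q.support.length) :
    (x ≠ y ∧ x ≠ z ∧ y ≠ z ∧ ¬G.Adj x y ∧ ¬G.Adj x z ∧ ¬G.Adj y z) ∧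
    Disjoint (predNbrs p x) (succNbrs p y) ∧
    Disjoint (predNbrs p x) (G.neighborSet z) ∧
    Disjoint (succNbrs p y) (G.neighborSet z) := by
  replace hlong : ∀ (u v : V) (r : G.Walk u v), r.IsPath → r.length ≤ p.length := by
    simpa only [Walk.length_support, Nat.add_le_add_iff_right] using hlong
  have hq2 : 2 ≤ q.length := by rw [Walk.length_support] at hq3; omega
  have hp2 : 2 ≤ p.length := hq2.trans (hlong _ _ q hq)
  have hz : z ∉ p.support := by
    intro hz
    obtain rfl := hint z hz q.end_mem_support
    have := (Walk.isPath_iff_nil.mp hq).length_eq_zero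
    omega
  have hxy : x ≠ y := by
    rintro rfl
    have := (Walk.isPath_iff_nil.mp hp).length_eq_zero
    omega
  have hxN := disjoint_predNbrs_neighborSet hp hlong hz
  have hyN := disjoint_succNbrs_neighborSet hp hlong hz
  have hyS : y ∈ succNbrs p y := predNbrs_reverse p y ▸ start_mem_predNbrs (by rw [Walk.length_reverse]; omega)
  refine ⟨⟨hxy, fun h => hz (h ▸ p.start_mem_support), fun h => hz (h ▸ p.end_mem_support),
    not_adj_endpoints hp hlong hq hint hw (by omega),
    fun h => hxN.notMem_of_mem_left (start_mem_predNbrs (by omega)) h.symm,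
    fun h => hyN.notMem_of_mem_left hyS h.symm⟩,
    disjoint_predNbrs_succNbrs hp hlong hq hint hw hq2, hxN, hyN⟩

/-- Let `p` be a longest path of `G` from `x` to `y`, and let `q` be a
path from `w ∈ V(p)` to `z` meeting `p` only in `w`, with at least 3 vertices and with as
many vertices as possible among all such paths. Then `{x, y, z}` is independent and the
sets `N⁻(x)`, `N⁺(y)`, `N(z)` are pairwise disjoint. -/
theorem indep_and_disjoint_of_longest_path {V : Type*} [Fintype V]
    (G : SimpleGraph V) (hconn : G.Connected)
    {x y : V} (p : G.Walk x y) (hp : p.IsPath)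
    (hlong : ∀ (u v : V) (r : G.Walk u v), r.IsPath →
      r.support.length ≤ p.support.length)
    {w z : V} (q : G.Walk w z) (hq : q.IsPath)
    (hw : w ∈ p.support)
    (hint : ∀ v, v ∈ p.support → v ∈ q.support → v = w)
    (hq3 : 3 ≤ q.support.length)
    (hqmax : ∀ (w' z' : V) (q' : G.Walk w' z'), q'.IsPath → w' ∈ p.support →
      (∀ v, v ∈ p.support → v ∈ q'.support → v = w') →
      q'.support.length ≤ q.support.length) :
    (x ≠ y ∧ x ≠ z ∧ y ≠ z ∧ ¬G.Adj x y ∧ ¬G.Adj x z ∧ ¬G.Adj y z) ∧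
    Disjoint (predNbrs p x) (succNbrs p y) ∧
    Disjoint (predNbrs p x) (G.neighborSet z) ∧
    Disjoint (succNbrs p y) (G.neighborSet z) :=
  indep_and_disjoint_of_longest_path_general G p hp hlong q hq hw hint hq3
end

section
/- Let k ≥ 2 be an integer and let G be a connected simple graph that has no spanning tree with at most k leaves. Then t_{k+1} ≥ t_2 + k − 1, where t_2 is the number of vertices of a longest path in G and t_{k+1} is the maximum order of a subgraph of G that is a tree with at most k+1 leaves. -/
/-! A maximum tree with at most `j` leaves cannot be spanning when `j ≤ k`, so, `G` being
connected, some edge `xw` leaves it. Attaching `xw` as a pendant edge gives a tree with one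
more vertex and at most one more leaf, whence `t_j + 1 ≤ t_{j+1}` for `2 ≤ j ≤ k`. Starting
from `t_2`, which is at least the order of a longest path, these `k - 1` steps give the bound. -/

open SimpleGraph

namespace SimpleGraph.Subgraph

variable {V : Type*} {G : SimpleGraph V}

lemma ncard_coe_neighborSet {H : G.Subgraph} (v : H.verts) :
    (H.coe.neighborSet v).ncard = (H.neighborSet v).ncard := by
  rw [← Nat.card_coe_set_eq, ← Nat.card_coe_set_eq]
  exact Nat.card_congr (coeNeighborSetEquiv v)

lemma isTree_coe_iff [Finite V] {H : G.Subgraph} :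
    H.coe.IsTree ↔ H.Connected ∧ H.edgeSet.ncard + 1 = H.verts.ncard := by
  rw [isTree_iff_connected_and_card, Subgraph.connected_iff', Nat.card_coe_set_eq,
    Nat.card_coe_set_eq, ← image_coe_edgeSet_coe,
    Set.ncard_image_of_injective _ (Sym2.map.injective Subtype.val_injective)]

end SimpleGraph.Subgraph

section

variable {V : Type*} {G : SimpleGraph V}

def leafSet (H : G.Subgraph) : Set V := {v ∈ H.verts | (H.neighborSet v).ncard = 1}

lemma leafCount_eq_ncard_leafSet (H : G.Subgraph) : leafCount H = (leafSet H).ncard := by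
  simp_rw [leafCount, Subgraph.ncard_coe_neighborSet]
  exact (Set.ncard_subtype (· ∈ H.verts) {v | (H.neighborSet v).ncard = 1}).trans
    (congrArg Set.ncard (Set.inter_comm _ _))

lemma leafSet_subset_verts (H : G.Subgraph) : leafSet H ⊆ H.verts := Set.sep_subset _ _

lemma IsEndedTree.mono {H : G.Subgraph} {j k : ℕ} (hT : IsEndedTree H j) (hjk : j ≤ k) :
    IsEndedTree H k :=
  ⟨hT.1, hT.2.trans hjk⟩

namespace SimpleGraph.Walk.IsPath

variable {u v : V} {p : G.Walk u v}

lemma ncard_verts_toSubgraph (hp : p.IsPath) : p.toSubgraph.verts.ncard = p.length + 1 := by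
  classical
  rw [verts_toSubgraph, ← List.coe_toFinset, Set.ncard_coe_finset,
    List.toFinset_card_of_nodup hp.support_nodup, length_support]

lemma ncard_edgeSet_toSubgraph (hp : p.IsPath) : p.toSubgraph.edgeSet.ncard = p.length := by
  classical
  rw [edgeSet_toSubgraph, edgeSet, ← List.coe_toFinset, Set.ncard_coe_finset,
    List.toFinset_card_of_nodup hp.isTrail.edges_nodup, length_edges]

lemma isTree_coe_toSubgraph [Finite V] (hp : p.IsPath) : p.toSubgraph.coe.IsTree :=
  Subgraph.isTree_coe_iff.mpr
    ⟨p.toSubgraph_connected, by rw [hp.ncard_verts_toSubgraph, hp.ncard_edgeSet_toSubgraph]⟩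

lemma leafSet_toSubgraph_subset (hp : p.IsPath) : leafSet p.toSubgraph ⊆ {u, v} := by
  rintro z ⟨hz, hdeg⟩
  rw [mem_verts_toSubgraph, mem_support_iff_exists_getVert] at hz
  obtain ⟨i, rfl, hi⟩ := hz
  by_contra hend
  rw [Set.mem_insert_iff, Set.mem_singleton_iff, not_or] at hend
  have hi₀ : i ≠ 0 := by rintro rfl; exact hend.1 p.getVert_zero
  have hil : i < p.length := hi.lt_of_ne (by rintro rfl; exact hend.2 p.getVert_length)
  rw [hp.ncard_neighborSet_toSubgraph_internal_eq_two hi₀ hil] at hdeg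
  exact absurd hdeg (by norm_num)

lemma isEndedTree_toSubgraph [Finite V] (hp : p.IsPath) : IsEndedTree p.toSubgraph 2 := by
  refine ⟨hp.isTree_coe_toSubgraph, ?_⟩
  rw [leafCount_eq_ncard_leafSet]
  calc (leafSet p.toSubgraph).ncard ≤ ({u, v} : Set V).ncard :=
        Set.ncard_le_ncard hp.leafSet_toSubgraph_subset
    _ ≤ 2 := (Set.ncard_insert_le u {v}).trans (by simp)

end SimpleGraph.Walk.IsPath

section Pendant

variable {H : G.Subgraph} {x w : V} (hxw : G.Adj x w)
include hxw

lemma verts_sup_subgraphOfAdj (hx : x ∈ H.verts) :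
    (H ⊔ G.subgraphOfAdj hxw).verts = insert w H.verts := by
  rw [Subgraph.verts_sup, subgraphOfAdj_verts, Set.union_insert, Set.union_singleton,
    Set.insert_eq_of_mem (Set.mem_insert_of_mem w hx)]

lemma ncard_verts_sup_subgraphOfAdj [Finite V] (hx : x ∈ H.verts) (hw : w ∉ H.verts) :
    (H ⊔ G.subgraphOfAdj hxw).verts.ncard = H.verts.ncard + 1 := by
  rw [verts_sup_subgraphOfAdj hxw hx, Set.ncard_insert_of_notMem hw]

lemma isTree_coe_sup_subgraphOfAdj [Finite V] (hT : H.coe.IsTree) (hx : x ∈ H.verts)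
    (hw : w ∉ H.verts) : (H ⊔ G.subgraphOfAdj hxw).coe.IsTree := by
  obtain ⟨hconn, hcard⟩ := Subgraph.isTree_coe_iff.mp hT
  have hnew : s(x, w) ∉ H.edgeSet := fun h =>
    hw (H.mem_verts_of_mem_edge h (Sym2.mem_mk_right x w))
  refine Subgraph.isTree_coe_iff.mpr ⟨Subgraph.connected_sup hconn.preconnected
    (Subgraph.subgraphOfAdj_connected hxw).preconnected ⟨x, hx, by simp⟩, ?_⟩
  rw [ncard_verts_sup_subgraphOfAdj hxw hx hw, Subgraph.edgeSet_sup,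
    edgeSet_subgraphOfAdj, Set.union_singleton, Set.ncard_insert_of_notMem hnew, hcard]

lemma leafSet_sup_subgraphOfAdj_subset {y : V} (hxy : H.Adj x y) (hw : w ∉ H.verts) :
    leafSet (H ⊔ G.subgraphOfAdj hxw) ⊆ insert w (leafSet H) := by
  rintro z ⟨hz, hdeg⟩
  rw [verts_sup_subgraphOfAdj hxw hxy.fst_mem] at hz
  rcases hz with rfl | hz
  · exact Set.mem_insert _ _
  refine Set.mem_insert_of_mem _ ⟨hz, ?_⟩
  rw [Subgraph.neighborSet_sup] at hdeg
  obtain rfl | hzx := eq_or_ne z x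
  · -- the attachment vertex has the two neighbours `y ∈ H` and `w ∉ H`
    obtain ⟨a, ha⟩ := Set.ncard_eq_one.mp hdeg
    have hy : y ∈ ({a} : Set V) := ha ▸ Or.inl hxy
    have hw' : w ∈ ({a} : Set V) := ha ▸ Or.inr (by simp)
    have hwy : w = y := hw'.trans hy.symm
    exact absurd (hwy ▸ hxy.snd_mem) hw
  · rwa [neighborSet_subgraphOfAdj_of_ne_of_ne hxw hzx (ne_of_mem_of_not_mem hz hw),
      Set.union_empty] at hdeg

-- The `2` accounts for a one-vertex `H`, where both `x` and `w` end up as leaves.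
lemma leafCount_sup_subgraphOfAdj_le [Finite V] (hH : H.Connected) (hx : x ∈ H.verts)
    (hw : w ∉ H.verts) : leafCount (H ⊔ G.subgraphOfAdj hxw) ≤ max (leafCount H + 1) 2 := by
  rw [leafCount_eq_ncard_leafSet, leafCount_eq_ncard_leafSet]
  rcases H.verts.subsingleton_or_nontrivial with hsub | hnt
  · calc (leafSet (H ⊔ G.subgraphOfAdj hxw)).ncard
        ≤ (H ⊔ G.subgraphOfAdj hxw).verts.ncard := Set.ncard_le_ncard (leafSet_subset_verts _)
      _ = H.verts.ncard + 1 := ncard_verts_sup_subgraphOfAdj hxw hx hw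
      _ ≤ 2 := by have := Set.ncard_le_one_iff_subsingleton.mpr hsub; omega
      _ ≤ _ := le_max_right _ _
  · have := hnt.coe_sort
    obtain ⟨y, hxy⟩ := hH.preconnected.exists_adj_of_nontrivial ⟨x, hx⟩
    calc (leafSet (H ⊔ G.subgraphOfAdj hxw)).ncard
        ≤ (insert w (leafSet H)).ncard :=
          Set.ncard_le_ncard (leafSet_sup_subgraphOfAdj_subset hxw hxy hw)
      _ ≤ (leafSet H).ncard + 1 := Set.ncard_insert_le _ _
      _ ≤ _ := le_max_left _ _

lemma IsEndedTree.sup_subgraphOfAdj [Finite V] {j : ℕ} (hT : IsEndedTree H j) (hj : 1 ≤ j)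
    (hx : x ∈ H.verts) (hw : w ∉ H.verts) : IsEndedTree (H ⊔ G.subgraphOfAdj hxw) (j + 1) :=
  ⟨isTree_coe_sup_subgraphOfAdj hxw hT.1 hx hw,
    (leafCount_sup_subgraphOfAdj_le hxw (Subgraph.connected_iff'.mpr hT.1.connected) hx hw).trans
      (max_le (by have := hT.2; omega) (by omega))⟩

end Pendant

section TreeOrd

variable [Finite V]

lemma bddAbove_treeOrders (G : SimpleGraph V) (k : ℕ) :
    BddAbove {m | ∃ H : G.Subgraph, IsEndedTree H k ∧ H.verts.ncard = m} :=
  ⟨Nat.card V, by rintro _ ⟨H, -, rfl⟩; exact Set.ncard_le_card _⟩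

lemma IsEndedTree.ncard_verts_le_treeOrd {H : G.Subgraph} {k : ℕ} (hT : IsEndedTree H k) :
    H.verts.ncard ≤ treeOrd G k :=
  le_csSup (bddAbove_treeOrders G k) ⟨H, hT, rfl⟩

lemma exists_isEndedTree_ncard_verts_eq_treeOrd [Nonempty V] (G : SimpleGraph V) (k : ℕ) :
    ∃ H : G.Subgraph, IsEndedTree H k ∧ H.verts.ncard = treeOrd G k := by
  obtain ⟨v⟩ := ‹Nonempty V›
  have hsingleton : IsEndedTree (G.singletonSubgraph v) k := by
    refine ⟨IsTree.coe_singletonSubgraph G v, ?_⟩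
    simp [leafCount_eq_ncard_leafSet, leafSet, neighborSet_singletonSubgraph]
  exact Nat.sSup_mem (s := {m | ∃ H : G.Subgraph, IsEndedTree H k ∧ H.verts.ncard = m})
    ⟨_, _, hsingleton, rfl⟩ (bddAbove_treeOrders G k)

lemma pathOrd_le_treeOrd_two (G : SimpleGraph V) : pathOrd G ≤ treeOrd G 2 := by
  refine csSup_le' ?_
  rintro _ ⟨u, v, p, hp, rfl⟩
  rw [Walk.length_support, ← hp.ncard_verts_toSubgraph]
  exact hp.isEndedTree_toSubgraph.ncard_verts_le_treeOrd

lemma treeOrd_add_one_le_of_not_exists_isSpanning (hconn : G.Connected) {j : ℕ} (hj : 1 ≤ j)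
    (hno : ¬ ∃ H : G.Subgraph, H.IsSpanning ∧ IsEndedTree H j) :
    treeOrd G j + 1 ≤ treeOrd G (j + 1) := by
  have := hconn.nonempty
  obtain ⟨H, hT, hcard⟩ := exists_isEndedTree_ncard_verts_eq_treeOrd G j
  obtain ⟨w, hw⟩ : ∃ w, w ∉ H.verts := not_forall.mp fun hsp => hno ⟨H, hsp, hT⟩
  obtain ⟨u⟩ := hT.1.connected.nonempty
  obtain ⟨d, -, hd, hdw⟩ := (hconn.preconnected u w).some.exists_boundary_dart H.verts u.2 hw
  rw [← hcard, ← ncard_verts_sup_subgraphOfAdj d.adj hd hdw]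
  exact (hT.sup_subgraphOfAdj d.adj hj hd hdw).ncard_verts_le_treeOrd

lemma treeOrd_two_add_le_of_not_exists_isSpanning (hconn : G.Connected) {k : ℕ}
    (hno : ¬ ∃ H : G.Subgraph, H.IsSpanning ∧ IsEndedTree H k) :
    ∀ i, i + 1 ≤ k → treeOrd G 2 + i ≤ treeOrd G (i + 2)
  | 0, _ => le_rfl
  | i + 1, hi => by
    show treeOrd G 2 + (i + 1) ≤ treeOrd G (i + 3)
    have hprev := treeOrd_two_add_le_of_not_exists_isSpanning hconn hno i (by omega)
    have hstep : treeOrd G (i + 2) + 1 ≤ treeOrd G (i + 3) :=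
      treeOrd_add_one_le_of_not_exists_isSpanning hconn (by omega)
        fun ⟨H, hsp, hT⟩ => hno ⟨H, hsp, hT.mono (by omega)⟩
    omega

end TreeOrd

end

/-- If `k ≥ 2` and the connected graph `G` has no spanning tree with at
most `k` leaves, then `t_{k+1} ≥ t₂ + k - 1`, where `t₂` is the order of a longest path. -/
theorem treeOrd_succ_ge_of_no_spanning_tree {V : Type*} [Fintype V] (k : ℕ) (hk : 2 ≤ k)
    (G : SimpleGraph V) (hconn : G.Connected)
    (hno : ¬ ∃ H : G.Subgraph, H.IsSpanning ∧ IsEndedTree H k) :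
    pathOrd G + k - 1 ≤ treeOrd G (k + 1) := by
  have hpath := pathOrd_le_treeOrd_two G
  have hgrowth := treeOrd_two_add_le_of_not_exists_isSpanning hconn hno (k - 1) (by omega)
  rw [show k - 1 + 2 = k + 1 by omega] at hgrowth
  omega
end

section
/- Let δ ≥ 1 and k ≥ 2 be integers, and let G be the join of the complete graph K_δ with the empty graph on δ + k vertices (i.e., (δ+k)K_1 + K_δ: δ + k pairwise nonadjacent vertices each adjacent to all vertices of a clique of size δ). Then d(x) + d(y) = 2δ for every pair of nonadjacent vertices x, y of G, and G has no spanning tree with at most k leaves. -/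
/-! Every edge meets an independent set in at most one vertex, so in a spanning tree `T` the
degrees of the `δ + k` independent vertices sum to at most `|E(T)| = 2δ + k - 1`. Each of them
has degree at least 1, and at least 2 unless it is one of the at most `k` leaves, so the same
sum is at least `2(δ + k) - k = 2δ + k`. -/

open SimpleGraph

open Finset

theorem sum_degree_le_card_edgeFinset_of_isIndep {W : Type*} [Fintype W] (T : SimpleGraph W)
    [DecidableRel T.Adj] (s : Finset W) (hs : IsIndep T s) :
    ∑ v ∈ s, T.degree v ≤ #T.edgeFinset := by
  simp only [← card_neighborFinset_eq_degree]
  rw [← card_sigma]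
  refine card_le_card_of_injOn (fun p => s(p.1, p.2)) (fun p hp => ?_) ?_
  · rw [mem_coe, mem_sigma, mem_neighborFinset] at hp
    simpa using hp.2
  · rintro ⟨v₁, w₁⟩ hp₁ ⟨v₂, w₂⟩ hp₂ heq
    simp only [coe_sigma, Set.mem_sigma_iff, mem_coe, mem_neighborFinset] at hp₁ hp₂
    rcases Sym2.eq_iff.mp heq with ⟨rfl, rfl⟩ | ⟨rfl, rfl⟩
    · rfl
    · exact absurd hp₁.2 (hs hp₁.1 hp₂.1 hp₁.2.ne)

theorem Finset.two_mul_card_le_sum_add_card_filter_eq_one {ι : Type*} (s : Finset ι) (f : ι → ℕ)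
    (hf : ∀ i ∈ s, 1 ≤ f i) : 2 * #s ≤ ∑ i ∈ s, f i + #{i ∈ s | f i = 1} := by
  rw [card_filter, ← sum_add_distrib, mul_comm, ← smul_eq_mul, ← sum_const]
  refine sum_le_sum fun i hi => ?_
  have := hf i hi
  split_ifs <;> omega

theorem SimpleGraph.IsTree.two_mul_card_lt_of_isIndep {W : Type*} [Fintype W] [Nontrivial W]
    {T : SimpleGraph W} [DecidableRel T.Adj] (hT : T.IsTree) (s : Finset W) (hs : IsIndep T s) :
    2 * #s < Fintype.card W + #{v | T.degree v = 1} := by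
  have hleaves : #{v ∈ s | T.degree v = 1} ≤ #{v | T.degree v = 1} :=
    card_le_card (filter_subset_filter _ (subset_univ s))
  have hlower := s.two_mul_card_le_sum_add_card_filter_eq_one (fun v => T.degree v)
    fun v _ => hT.connected.preconnected.degree_pos_of_nontrivial v
  have hupper := sum_degree_le_card_edgeFinset_of_isIndep T s hs
  have hedges := hT.card_edgeFinset
  omega

theorem leafCount_eq_card_degree_eq_one {V : Type*} {G : SimpleGraph V} (H : G.Subgraph)
    [Fintype H.verts] [DecidableRel H.coe.Adj] : leafCount H = #{v | H.coe.degree v = 1} := by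
  rw [leafCount, ← Set.ncard_coe_finset, coe_filter]
  congr 1
  ext v
  simp only [mem_univ, true_and, ← card_neighborSet_eq_degree,
    Set.ncard_eq_toFinset_card', Set.toFinset_card]

theorem SimpleGraph.Subgraph.IsSpanning.two_mul_card_lt_of_isIndep {V : Type*} [Fintype V]
    [Nontrivial V] {G : SimpleGraph V} {H : G.Subgraph} (hsp : H.IsSpanning) (hT : H.coe.IsTree)
    (s : Finset V) (hs : IsIndep G s) : 2 * #s < Fintype.card V + leafCount H := by
  classical
  have : Nontrivial H.verts := (Equiv.subtypeUnivEquiv hsp).nontrivial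
  have hcard : #(s.subtype (· ∈ H.verts)) = #s := by
    rw [card_subtype, filter_true_of_mem fun v _ => hsp v]
  have hindep : IsIndep H.coe (s.subtype (· ∈ H.verts)) := fun u hu v hv huv hadj =>
    hs (by simpa using hu) (by simpa using hv) (Subtype.val_injective.ne huv) (H.adj_sub hadj)
  rw [← hcard, ← Fintype.card_congr (Equiv.subtypeUnivEquiv hsp), leafCount_eq_card_degree_eq_one]
  exact hT.two_mul_card_lt_of_isIndep _ hindep

section Join

variable {α β : Type*} {G : SimpleGraph (α ⊕ β)}

theorem neighborSet_inr_of_adj_iff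
    (hG : ∀ u v, G.Adj u v ↔ u ≠ v ∧ (u.isLeft = true ∨ v.isLeft = true)) (b : β) :
    G.neighborSet (Sum.inr b) = Set.range Sum.inl := by
  ext (a | a) <;> simp [hG]

theorem deg_inr_of_adj_iff
    (hG : ∀ u v, G.Adj u v ↔ u ≠ v ∧ (u.isLeft = true ∨ v.isLeft = true)) (b : β) :
    deg G (Sum.inr b) = Nat.card α := by
  rw [deg, neighborSet_inr_of_adj_iff hG, Set.ncard_range_of_injective Sum.inl_injective]

theorem deg_add_deg_of_not_adj_of_adj_iff
    (hG : ∀ u v, G.Adj u v ↔ u ≠ v ∧ (u.isLeft = true ∨ v.isLeft = true)) {x y : α ⊕ β}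
    (hxy : x ≠ y) (hadj : ¬ G.Adj x y) : deg G x + deg G y = 2 * Nat.card α := by
  rw [hG, not_and, not_or] at hadj
  obtain ⟨hx, hy⟩ := hadj hxy
  obtain ⟨a, rfl⟩ := Sum.isRight_iff.mp (by simpa using hx)
  obtain ⟨b, rfl⟩ := Sum.isRight_iff.mp (by simpa using hy)
  rw [deg_inr_of_adj_iff hG, deg_inr_of_adj_iff hG, two_mul]

theorem not_exists_isSpanning_isEndedTree_of_adj_iff [Fintype α] [Fintype β] [Nontrivial (α ⊕ β)]
    (hG : ∀ u v, G.Adj u v ↔ u ≠ v ∧ (u.isLeft = true ∨ v.isLeft = true)) {k : ℕ}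
    (hk : Fintype.card α + k ≤ Fintype.card β) :
    ¬ ∃ H : G.Subgraph, H.IsSpanning ∧ IsEndedTree H k := by
  rintro ⟨H, hsp, hT, hleaves⟩
  have hindep : IsIndep G (univ.map .inr : Finset (α ⊕ β)) := by
    intro u hu v hv _
    simp only [coe_map, coe_univ, Set.image_univ, Set.mem_range] at hu hv
    obtain ⟨a, rfl⟩ := hu
    obtain ⟨b, rfl⟩ := hv
    simp [hG]
  have hbound := hsp.two_mul_card_lt_of_isIndep hT _ hindep
  simp only [card_map, card_univ, Fintype.card_sum] at hbound
  omega

end Join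

theorem join_example_no_spanning_tree_general (δ k : ℕ) (hδ : 1 ≤ δ)
    (G : SimpleGraph (Fin δ ⊕ Fin (δ + k)))
    (hG : ∀ u v, G.Adj u v ↔ u ≠ v ∧ (u.isLeft = true ∨ v.isLeft = true)) :
    (∀ x y, x ≠ y → ¬ G.Adj x y → deg G x + deg G y = 2 * δ) ∧
    ¬ ∃ H : G.Subgraph, H.IsSpanning ∧ IsEndedTree H k := by
  refine ⟨fun x y hxy hadj => ?_, ?_⟩
  · simpa using deg_add_deg_of_not_adj_of_adj_iff hG hxy hadj
  · have : Nontrivial (Fin δ ⊕ Fin (δ + k)) :=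
      nontrivial_of_ne (.inl ⟨0, hδ⟩) (.inr ⟨0, by omega⟩) Sum.inl_ne_inr
    exact not_exists_isSpanning_isEndedTree_of_adj_iff hG (by simp)

/-- Let `G = (δ+k)K₁ + K_δ` (the join of a clique of size `δ` with
`δ + k` independent vertices), `δ ≥ 1`, `k ≥ 2`. Then `d(x) + d(y) = 2δ` for every pair
of nonadjacent vertices, and `G` has no spanning tree with at most `k` leaves. -/
theorem join_example_no_spanning_tree (δ k : ℕ) (hδ : 1 ≤ δ) (hk : 2 ≤ k)
    (G : SimpleGraph (Fin δ ⊕ Fin (δ + k)))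
    (hG : ∀ u v, G.Adj u v ↔ u ≠ v ∧ (u.isLeft = true ∨ v.isLeft = true)) :
    (∀ x y, x ≠ y → ¬ G.Adj x y → deg G x + deg G y = 2 * δ) ∧
    ¬ ∃ H : G.Subgraph, H.IsSpanning ∧ IsEndedTree H k :=
  join_example_no_spanning_tree_general δ k hδ G hG
end

section
/- Let δ ≥ 2 and k ≥ 2 be integers, and let G be the join of the complete graph K_{δ−1} with the disjoint union of δ + k − 1 copies of K_2 (i.e., (δ+k−1)K_2 + K_{δ−1}). Then d(x) + d(y) + d(z) = 3δ for every independent set {x, y, z} of three pairwise nonadjacent vertices of G, and G has no dominating tree with at most k leaves. -/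
open SimpleGraph

lemma fin2_ne_iff (a b : Fin 2) : a ≠ b ↔ a = b + 1 := by revert a b; decide


lemma deg_right (δ k : ℕ) (hδ : 2 ≤ δ)
    (G : SimpleGraph (Fin (δ - 1) ⊕ (Fin (δ + k - 1) × Fin 2)))
    (hG : ∀ u v, G.Adj u v ↔ u ≠ v ∧ (u.isLeft = true ∨ v.isLeft = true ∨
      ∃ (i : Fin (δ + k - 1)) (a b : Fin 2),
        u = Sum.inr (i, a) ∧ v = Sum.inr (i, b)))
    (i : Fin (δ + k - 1)) (a : Fin 2) : deg G (Sum.inr (i, a)) = δ := by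
  have key : G.neighborSet (Sum.inr (i, a)) =
      insert (Sum.inr (i, a + 1)) (Set.range Sum.inl) := by
    ext v
    simp only [mem_neighborSet, hG, Set.mem_insert_iff, Set.mem_range]
    constructor
    · rintro ⟨hne, h | h | ⟨j, b, c, hb, hc⟩⟩
      · simp at h
      · cases v with
        | inl t => exact Or.inr ⟨t, rfl⟩
        | inr t => simp at h
      · obtain ⟨rfl, rfl⟩ : i = j ∧ a = b := by simpa [Prod.ext_iff] using hb
        subst hc
        left
        have hca : c ≠ a := by
          rintro rfl; exact hne rfl
        rw [(fin2_ne_iff c a).1 hca]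
    · rintro (rfl | ⟨t, rfl⟩)
      · refine ⟨?_, Or.inr (Or.inr ⟨i, a, a + 1, rfl, rfl⟩)⟩
        have : a ≠ a + 1 := by revert a; decide
        simpa [Prod.ext_iff] using this
      · exact ⟨by simp, Or.inr (Or.inl rfl)⟩
  rw [deg, key, Set.ncard_insert_of_notMem (by simp)]
  have : (Set.range (Sum.inl : Fin (δ-1) → Fin (δ - 1) ⊕ (Fin (δ + k - 1) × Fin 2))).ncard = δ - 1 := by
    rw [← Set.image_univ, Set.ncard_image_of_injective _ Sum.inl_injective,
      Set.ncard_univ, Nat.card_eq_fintype_card, Fintype.card_fin]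
  rw [this]
  omega


lemma sum_deg_eq {W : Type*} [Fintype W] [DecidableEq W] (Γ : SimpleGraph W)
    [DecidableRel Γ.Adj] (S : Finset W) :
    ∑ v ∈ S, Γ.degree v = ∑ e ∈ Γ.edgeFinset, (S.filter (fun v => v ∈ e)).card := by
  have h1 : ∀ v, Γ.degree v = (Γ.edgeFinset.filter (fun e => v ∈ e)).card := by
    intro v
    rw [← card_incidenceFinset_eq_degree, incidenceFinset_eq_filter]
  simp_rw [h1, Finset.card_filter]
  exact Finset.sum_comm


lemma deg_pos_of_conn {W : Type*} [Fintype W] (Γ : SimpleGraph W) [DecidableRel Γ.Adj]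
    (h : Γ.Connected) (h2 : 1 < Fintype.card W) (v : W) : 0 < Γ.degree v := by
  obtain ⟨w, hw⟩ := Fintype.exists_ne_of_one_lt_card h2 v
  obtain ⟨p⟩ := h.preconnected v w
  rw [degree_pos_iff_exists_adj]
  cases p with
  | nil => exact absurd rfl hw.symm
  | cons h q => exact ⟨_, h⟩


lemma fin2_cases {a b : Fin 2} (h : a ≠ b) : (a = 0 ∧ b = 1) ∨ (a = 1 ∧ b = 0) := by
  revert h; revert a b; decide



lemma deg_eq_ncard {W : Type*} (Γ : SimpleGraph W) (v : W) (inst : Fintype (Γ.neighborSet v)) :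
    @SimpleGraph.degree _ Γ v inst = (Γ.neighborSet v).ncard := by
  rw [← @SimpleGraph.card_neighborSet_eq_degree _ Γ v inst,
    ← @Nat.card_eq_fintype_card _ inst, Nat.card_coe_set_eq]


lemma no_tree (δ k : ℕ) (hδ : 2 ≤ δ) (hk : 2 ≤ k)
    (G : SimpleGraph (Fin (δ - 1) ⊕ (Fin (δ + k - 1) × Fin 2)))
    (hG : ∀ u v, G.Adj u v ↔ u ≠ v ∧ (u.isLeft = true ∨ v.isLeft = true ∨
      ∃ (i : Fin (δ + k - 1)) (a b : Fin 2),
        u = Sum.inr (i, a) ∧ v = Sum.inr (i, b)))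
    (H : G.Subgraph) (htree : H.coe.IsTree) (hleaf : leafCount H ≤ k)
    (hindep : IsIndep G H.vertsᶜ) : False := by
  classical
  haveI : Fintype ↥H.verts := Fintype.ofFinite _
  -- Step A: every pair has a vertex in H
  have hA : ∀ i : Fin (δ + k - 1), ∃ a : Fin 2, Sum.inr (i, a) ∈ H.verts := by
    intro i
    by_contra hcon
    push_neg at hcon
    have hne : (Sum.inr (i, 0) : Fin (δ - 1) ⊕ (Fin (δ + k - 1) × Fin 2)) ≠ Sum.inr (i, 1) := by
      simp [Prod.ext_iff]
    have hadj : G.Adj (Sum.inr (i, 0)) (Sum.inr (i, 1)) :=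
      (hG _ _).2 ⟨hne, Or.inr (Or.inr ⟨i, 0, 1, rfl, rfl⟩)⟩
    exact hindep (hcon 0) (hcon 1) hne hadj
  choose f hf using hA
  have hik : 1 < δ + k - 1 := by omega
  set i0 : Fin (δ + k - 1) := ⟨0, by omega⟩ with hi0
  set i1 : Fin (δ + k - 1) := ⟨1, by omega⟩ with hi1
  -- Step B: at least two vertices
  have hcard2 : 1 < Fintype.card ↥H.verts := by
    rw [Fintype.one_lt_card_iff]
    refine ⟨⟨_, hf i0⟩, ⟨_, hf i1⟩, ?_⟩
    simp only [ne_eq, Subtype.mk.injEq, Sum.inr.injEq, Prod.mk.injEq]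
    rintro ⟨h, -⟩
    exact absurd (congrArg Fin.val h) (by simp [hi0, hi1])
  -- canonical degree
  set Dg : ↥H.verts → ℕ := fun v => (H.coe.neighborSet v).ncard with hDg
  -- Step C: min degree 1
  have hdegpos : ∀ v, 0 < Dg v := by
    intro v
    have h := deg_pos_of_conn H.coe htree.isConnected hcard2 v
    rwa [deg_eq_ncard] at h
  -- Step D: leaf finset
  set Lf : Finset ↥H.verts := Finset.univ.filter (fun v => Dg v = 1) with hLfdef
  have hLf : Lf.card ≤ k := by
    refine le_trans (le_of_eq ?_) hleaf
    rw [leafCount, Set.ncard_eq_toFinset_card', Set.toFinset_setOf]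
  -- edge count of the tree
  have htreeE : H.coe.edgeFinset.card + 1 = Fintype.card ↥H.verts :=
    htree.card_edgeFinset
  set E : ℕ := H.coe.edgeFinset.card with hE
  -- left/right vertex sets
  set RS : Finset ↥H.verts := Finset.univ.filter
    (fun v => (v : Fin (δ - 1) ⊕ (Fin (δ + k - 1) × Fin 2)).isRight = true) with hRSdef
  set LS : Finset ↥H.verts := Finset.univ.filter
    (fun v => (v : Fin (δ - 1) ⊕ (Fin (δ + k - 1) × Fin 2)).isLeft = true) with hLSdef
  have hsplit : LS.card + RS.card = Fintype.card ↥H.verts := by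
    rw [hLSdef, hRSdef]
    rw [← Finset.card_univ]
    have := Finset.card_filter_add_card_filter_not
      (s := (Finset.univ : Finset ↥H.verts))
      (p := fun v => (v : Fin (δ - 1) ⊕ (Fin (δ + k - 1) × Fin 2)).isLeft = true)
    rw [← this]
    congr 1
    apply congrArg Finset.card
    apply Finset.filter_congr
    intro v _
    cases hv : (v : Fin (δ - 1) ⊕ (Fin (δ + k - 1) × Fin 2)) <;> simp [hv]
  have hLS : LS.card ≤ δ - 1 := by
    have h2 : LS.card ≤ (Finset.univ : Finset (Fin (δ - 1))).card := by
      refine Finset.card_le_card_of_injOn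
        (fun v => Sum.elim id (fun _ => (⟨0, by omega⟩ : Fin (δ - 1)))
          (v : Fin (δ - 1) ⊕ (Fin (δ + k - 1) × Fin 2)))
        (fun v _ => Finset.mem_univ _) ?_
      intro v hv w hw hvw
      simp only [Finset.coe_filter, Set.mem_setOf_eq, hLSdef] at hv hw
      obtain ⟨tv, htv⟩ := Sum.isLeft_iff.1 hv.2
      obtain ⟨tw, htw⟩ := Sum.isLeft_iff.1 hw.2
      apply Subtype.ext
      have hvw' := hvw
      simp only [htv, htw, Sum.elim_inl, id_eq] at hvw'
      rw [htv, htw, hvw']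
    rw [Finset.card_univ, Fintype.card_fin] at h2
    exact h2
  -- pair-edge set
  set pE : Finset (Sym2 ↥H.verts) := H.coe.edgeFinset.filter
    (fun e => ∀ v ∈ e, ((v : ↥H.verts) : Fin (δ - 1) ⊕ (Fin (δ + k - 1) × Fin 2)).isRight = true)
    with hpEdef
  have hpEsub : pE ⊆ H.coe.edgeFinset := Finset.filter_subset _ _
  -- upper bound for the degree sum over RS
  have hup : ∑ v ∈ RS, Dg v ≤ E + pE.card := by
    have hsum := sum_deg_eq H.coe RS
    simp only [deg_eq_ncard] at hsum
    have hsum' : ∑ v ∈ RS, Dg v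
        = ∑ e ∈ H.coe.edgeFinset, (RS.filter (fun v => v ∈ e)).card := hsum
    rw [hsum']
    have hbound : ∀ e ∈ H.coe.edgeFinset,
        (RS.filter (fun v => v ∈ e)).card ≤ 1 + (if e ∈ pE then 1 else 0) := by
      intro e he
      by_cases hp : e ∈ pE
      · simp only [hp, if_true]
        induction e with
        | h u w =>
          have hsub : RS.filter (fun v => v ∈ s(u, w)) ⊆ {u, w} := by
            intro x hx
            rw [Finset.mem_filter] at hx
            rw [Sym2.mem_iff] at hx
            rcases hx.2 with rfl | rfl
            · exact Finset.mem_insert_self _ _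
            · exact Finset.mem_insert_of_mem (Finset.mem_singleton_self _)
          calc (RS.filter (fun v => v ∈ s(u, w))).card ≤ ({u, w} : Finset _).card :=
                Finset.card_le_card hsub
            _ ≤ 2 := le_trans (Finset.card_insert_le _ _) (by simp)
      · simp only [hp, if_false, add_zero]
        rw [hpEdef, Finset.mem_filter] at hp
        push_neg at hp
        obtain ⟨z, hz, hzr⟩ := hp he
        rw [Finset.card_le_one]
        intro x hx y hy
        rw [Finset.mem_filter] at hx hy
        have hxr : (↑x : Fin (δ - 1) ⊕ (Fin (δ + k - 1) × Fin 2)).isRight = true := by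
          have := hx.1
          rw [hRSdef, Finset.mem_filter] at this
          exact this.2
        have hyr : (↑y : Fin (δ - 1) ⊕ (Fin (δ + k - 1) × Fin 2)).isRight = true := by
          have := hy.1
          rw [hRSdef, Finset.mem_filter] at this
          exact this.2
        induction e with
        | h u w =>
          rw [Sym2.mem_iff] at hz
          have hx2 := hx.2
          have hy2 := hy.2
          rw [Sym2.mem_iff] at hx2 hy2
          have hxz : x ≠ z := fun h => by rw [h] at hxr; rw [hxr] at hzr; exact hzr rfl
          have hyz : y ≠ z := fun h => by rw [h] at hyr; rw [hyr] at hzr; exact hzr rfl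
          rcases hz with rfl | rfl
          · rcases hx2 with rfl | rfl
            · exact absurd rfl hxz
            · rcases hy2 with rfl | rfl
              · exact absurd rfl hyz
              · rfl
          · rcases hx2 with rfl | rfl
            · rcases hy2 with rfl | rfl
              · rfl
              · exact absurd rfl hyz
            · exact absurd rfl hxz
    calc ∑ e ∈ H.coe.edgeFinset, (RS.filter (fun v => v ∈ e)).card
        ≤ ∑ e ∈ H.coe.edgeFinset, (1 + if e ∈ pE then 1 else 0) :=
          Finset.sum_le_sum hbound
      _ = E + pE.card := by
          rw [Finset.sum_add_distrib, Finset.sum_const, smul_eq_mul, mul_one]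
          congr 1
          rw [← Finset.card_filter]
          congr 1
          rw [Finset.filter_mem_eq_inter, Finset.inter_eq_right.2 hpEsub]
  -- lower bound for the degree sum over RS
  have hlow : 2 * RS.card ≤ (∑ v ∈ RS, Dg v) + k := by
    have h1 : ∀ v ∈ RS, 2 ≤ Dg v + (if Dg v = 1 then 1 else 0) := by
      intro v _
      have := hdegpos v
      by_cases h : Dg v = 1 <;> simp [h] <;> omega
    have h2 : (RS.filter (fun v => Dg v = 1)).card ≤ k := by
      refine le_trans (Finset.card_le_card ?_) hLf
      intro x hx
      rw [Finset.mem_filter] at hx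
      rw [hLfdef, Finset.mem_filter]
      exact ⟨Finset.mem_univ _, hx.2⟩
    calc 2 * RS.card = ∑ _v ∈ RS, 2 := by
          rw [Finset.sum_const, smul_eq_mul, mul_comm]
      _ ≤ ∑ v ∈ RS, (Dg v + if Dg v = 1 then 1 else 0) := Finset.sum_le_sum h1
      _ = (∑ v ∈ RS, Dg v) + (RS.filter (fun v => Dg v = 1)).card := by
          rw [Finset.sum_add_distrib, Finset.card_filter]
      _ ≤ (∑ v ∈ RS, Dg v) + k := by omega
  -- index of a vertex
  set idx : ↥H.verts → Fin (δ + k - 1) := fun v =>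
    Sum.elim (fun _ => i0) Prod.fst (v : Fin (δ - 1) ⊕ (Fin (δ + k - 1) × Fin 2)) with hidx
  have hfib : RS.card = ∑ i : Fin (δ + k - 1), (RS.filter (fun v => idx v = i)).card :=
    Finset.card_eq_sum_card_fiberwise (fun v _ => Finset.mem_univ _)
  -- index of an edge
  set eidx : Sym2 ↥H.verts → Fin (δ + k - 1) :=
    Sym2.lift ⟨fun u w => max (idx u) (idx w), fun _ _ => max_comm _ _⟩ with heidx
  -- structure of pair edges
  have hstruct : ∀ e ∈ pE, ∃ (i : Fin (δ + k - 1)) (h0 : Sum.inr (i, (0 : Fin 2)) ∈ H.verts)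
      (h1 : Sum.inr (i, (1 : Fin 2)) ∈ H.verts),
      eidx e = i ∧ e = s(⟨Sum.inr (i, 0), h0⟩, ⟨Sum.inr (i, 1), h1⟩) := by
    intro e he
    rw [hpEdef, Finset.mem_filter] at he
    obtain ⟨heE, hall⟩ := he
    induction e with
    | h u w =>
      have hadj : H.coe.Adj u w := by
        rw [SimpleGraph.mem_edgeFinset] at heE
        exact heE
      have hGadj : G.Adj ↑u ↑w := H.adj_sub hadj
      rw [hG] at hGadj
      obtain ⟨hne, hcase⟩ := hGadj
      have hur := hall u (Sym2.mem_mk_left u w)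
      have hwr := hall w (Sym2.mem_mk_right u w)
      rcases hcase with h | h | ⟨j, a, b, hu, hw⟩
      · obtain ⟨t, ht⟩ := Sum.isLeft_iff.1 h
        rw [ht] at hur
        simp at hur
      · obtain ⟨t, ht⟩ := Sum.isLeft_iff.1 h
        rw [ht] at hwr
        simp at hwr
      · have hab : a ≠ b := by
          rintro rfl
          rw [hu, hw] at hne
          exact hne rfl
        have hej : eidx s(u, w) = j := by
          rw [heidx, Sym2.lift_mk, hidx]
          simp only [hu, hw, Sum.elim_inr]
          exact max_self j
        rcases fin2_cases hab with ⟨rfl, rfl⟩ | ⟨rfl, rfl⟩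
        · refine ⟨j, hu ▸ u.2, hw ▸ w.2, hej, ?_⟩
          rw [Sym2.eq_iff]
          exact Or.inl ⟨Subtype.ext hu, Subtype.ext hw⟩
        · refine ⟨j, hw ▸ w.2, hu ▸ u.2, hej, ?_⟩
          rw [Sym2.eq_iff]
          exact Or.inr ⟨Subtype.ext hu, Subtype.ext hw⟩
  -- injectivity of the edge index on pair edges
  have hinj : Set.InjOn eidx ↑pE := by
    intro e1 he1 e2 he2 heq
    obtain ⟨j1, a0, a1, hj1, hs1⟩ := hstruct e1 (Finset.mem_coe.1 he1)
    obtain ⟨j2, b0, b1, hj2, hs2⟩ := hstruct e2 (Finset.mem_coe.1 he2)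
    have hj : j1 = j2 := by rw [← hj1, ← hj2, heq]
    subst hj
    rw [hs1, hs2]
  have himg : (Finset.image eidx pE).card = pE.card := Finset.card_image_of_injOn hinj
  -- fiber lower bounds
  have hfiblb : ∀ i : Fin (δ + k - 1),
      1 + (if i ∈ Finset.image eidx pE then 1 else 0)
        ≤ (RS.filter (fun v => idx v = i)).card := by
    intro i
    by_cases hi : i ∈ Finset.image eidx pE
    · simp only [hi, if_true]
      obtain ⟨e, he, hei⟩ := Finset.mem_image.1 hi
      obtain ⟨i', h0, h1, hei', hes⟩ := hstruct e he
      have hii : i' = i := by rw [← hei', hei]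
      subst hii
      have hm0 : (⟨Sum.inr (i', 0), h0⟩ : ↥H.verts) ∈ RS.filter (fun v => idx v = i') := by
        rw [Finset.mem_filter, hRSdef, Finset.mem_filter]
        refine ⟨⟨Finset.mem_univ _, rfl⟩, ?_⟩
        rfl
      have hm1 : (⟨Sum.inr (i', 1), h1⟩ : ↥H.verts) ∈ RS.filter (fun v => idx v = i') := by
        rw [Finset.mem_filter, hRSdef, Finset.mem_filter]
        refine ⟨⟨Finset.mem_univ _, rfl⟩, ?_⟩
        rfl
      have hne01 : (⟨Sum.inr (i', 0), h0⟩ : ↥H.verts) ≠ ⟨Sum.inr (i', 1), h1⟩ := by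
        intro hcon
        have := congrArg Subtype.val hcon
        simp [Prod.ext_iff] at this
      have := Finset.one_lt_card.2 ⟨_, hm0, _, hm1, hne01⟩
      omega
    · simp only [hi, if_false, add_zero]
      have hm : (⟨Sum.inr (i, f i), hf i⟩ : ↥H.verts) ∈ RS.filter (fun v => idx v = i) := by
        rw [Finset.mem_filter, hRSdef, Finset.mem_filter]
        refine ⟨⟨Finset.mem_univ _, rfl⟩, ?_⟩
        rfl
      exact Finset.card_pos.2 ⟨_, hm⟩
  -- lower bound on the number of right vertices
  have hRSlb : (δ + k - 1) + pE.card ≤ RS.card := by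
    rw [hfib]
    calc (δ + k - 1) + pE.card
        = ∑ i : Fin (δ + k - 1), (1 + if i ∈ Finset.image eidx pE then 1 else 0) := by
          rw [Finset.sum_add_distrib, Finset.sum_const, smul_eq_mul, mul_one,
            Finset.card_univ, Fintype.card_fin]
          congr 1
          rw [← himg, ← Finset.card_filter]
          congr 1
          rw [Finset.filter_mem_eq_inter, Finset.univ_inter]
      _ ≤ ∑ i : Fin (δ + k - 1), (RS.filter (fun v => idx v = i)).card :=
          Finset.sum_le_sum (fun i _ => hfiblb i)
  -- final contradiction
  set SD := ∑ v ∈ RS, Dg v with hSD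
  omega

/-- Let `G = (δ+k-1)K₂ + K_{δ-1}` (the join of a clique of size `δ - 1`
with the disjoint union of `δ + k - 1` edges), `δ ≥ 2`, `k ≥ 2`. Then
`d(x) + d(y) + d(z) = 3δ` for every independent triple `{x, y, z}`, and `G` has no
dominating tree with at most `k` leaves. -/
theorem join_example_no_dominating_tree (δ k : ℕ) (hδ : 2 ≤ δ) (hk : 2 ≤ k)
    (G : SimpleGraph (Fin (δ - 1) ⊕ (Fin (δ + k - 1) × Fin 2)))
    (hG : ∀ u v, G.Adj u v ↔ u ≠ v ∧ (u.isLeft = true ∨ v.isLeft = true ∨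
      ∃ (i : Fin (δ + k - 1)) (a b : Fin 2),
        u = Sum.inr (i, a) ∧ v = Sum.inr (i, b))) :
    (∀ x y z, x ≠ y → x ≠ z → y ≠ z → ¬G.Adj x y → ¬G.Adj x z → ¬G.Adj y z →
      deg G x + deg G y + deg G z = 3 * δ) ∧
    ¬ ∃ H : G.Subgraph, IsEndedTree H k ∧ IsIndep G H.vertsᶜ := by
  constructor
  · intro x y z hxy hxz hyz haxy haxz hayz
    have hright : ∀ u v : Fin (δ - 1) ⊕ (Fin (δ + k - 1) × Fin 2),
        u ≠ v → ¬G.Adj u v → u.isLeft = false := by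
      intro u v huv ha
      cases hu : u.isLeft
      · rfl
      · exact absurd ((hG u v).2 ⟨huv, Or.inl hu⟩) ha
    have hx := hright x y hxy haxy
    have hy := hright y z hyz hayz
    have hz := hright z x (Ne.symm hxz) (fun h => haxz h.symm)
    obtain ⟨ix, rfl⟩ : ∃ p, x = Sum.inr p := by
      cases x with
      | inl t => simp at hx
      | inr p => exact ⟨p, rfl⟩
    obtain ⟨iy, rfl⟩ : ∃ p, y = Sum.inr p := by
      cases y with
      | inl t => simp at hy
      | inr p => exact ⟨p, rfl⟩
    obtain ⟨iz, rfl⟩ : ∃ p, z = Sum.inr p := by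
      cases z with
      | inl t => simp at hz
      | inr p => exact ⟨p, rfl⟩
    rw [deg_right δ k hδ G hG, deg_right δ k hδ G hG, deg_right δ k hδ G hG]
    ring
  · rintro ⟨H, ⟨htree, hleaf⟩, hindep⟩
    exact no_tree δ k hδ hk G hG H htree hleaf hindep
end
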